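/- arXiv:2407.02875 — 4 statements merged into one kernel-verified Lean document; each statement's English description precedes it below -/
import Mathlib

section
/- For every t ∈ ℂ⁴ (with no restriction on the parameters), the restriction of δ_t to the 4-dimensional subspace spanned by x₁∧y₃, x₂∧y₃, x₃∧y₁, x₃∧y₂ has rank exactly 2; consequently δ_t(Λ^{1,1}) has dimension 3 and ker(δ_t) ∩ Λ^{1,1} has dimension 6. -/
/-!
On `Λ^{1,1}`, `δ_t` kills `xᵢ∧yⱼ` for `i, j ≤ 2`, sends `xᵢ∧y₃` to `xᵢ∧y₁∧y₂` for `i ≤ 2`, and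
sends `x₃∧y₁`, `x₃∧y₂` into the span of these two images (with coefficients read off from `t`);
finally `δ_t(x₃∧y₃)` has coefficient `1` on `x₃∧y₁∧y₂`. Hence `δ_t(Λ^{1,1})` is spanned by the
three `δ_t(xᵢ∧y₃)`, which are independent since the coefficient of `x_k∧y₁∧y₂` in `δ_t(xᵢ∧y₃)` is
`1` for `k = i` and `0` otherwise. Rank–nullity on the `9`-dimensional `Λ^{1,1}` gives the kernel.
-/

noncomputable section

open ExteriorAlgebra

/-- The exterior algebra `Λ` over `ℂ` on six generators. -/
abbrev Lam : Type := ExteriorAlgebra ℂ (Fin 6 → ℂ)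

/-- The generators `x₁, x₂, x₃` of bidegree `(1,0)` (indexed by `0, 1, 2`). -/
def xg (i : Fin 3) : Lam := ExteriorAlgebra.ι ℂ (Pi.single (Fin.castAdd 3 i) 1)

/-- The generators `y₁, y₂, y₃` of bidegree `(0,1)` (indexed by `0, 1, 2`). -/
def yg (j : Fin 3) : Lam := ExteriorAlgebra.ι ℂ (Pi.single (Fin.natAdd 3 j) 1)

/-- The ordered wedge monomial `x_{i₁}∧⋯∧x_{i_p}∧y_{j₁}∧⋯∧y_{j_q}` attached
to finsets `s = {i₁ < ⋯ < i_p}` and `u = {j₁ < ⋯ < j_q}`. -/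
def monom (s u : Finset (Fin 3)) : Lam :=
  ((s.sort (· ≤ ·)).map xg).prod * ((u.sort (· ≤ ·)).map yg).prod

/-- The bigraded component `Λ^{p,q}`, the span of the monomials of bidegree `(p,q)`. -/
def bigraded (p q : ℤ) : Submodule ℂ Lam :=
  Submodule.span ℂ
    {m | ∃ s u : Finset (Fin 3), (s.card : ℤ) = p ∧ (u.card : ℤ) = q ∧ m = monom s u}

/-- The component of pure total degree `k` of `Λ`. -/
def degComp (k : ℕ) : Submodule ℂ Lam :=
  LinearMap.range (ExteriorAlgebra.ι ℂ : (Fin 6 → ℂ) →ₗ[ℂ] Lam) ^ k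

/-- The graded Leibniz rule: `d(a∧b) = d(a)∧b + (−1)ᵏ a∧d(b)` for `a` of pure
total degree `k`. -/
def IsAntiderivation (d : Lam →ₗ[ℂ] Lam) : Prop :=
  ∀ (k : ℕ), ∀ a ∈ degComp k, ∀ b : Lam,
    d (a * b) = d a * b + ((-1 : ℂ) ^ k) • (a * d b)

/-- `d` is the map `∂`: the antiderivation with `∂x₁ = ∂x₂ = 0`, `∂x₃ = −x₁∧x₂`,
`∂yⱼ = 0`. -/
def IsDel (d : Lam →ₗ[ℂ] Lam) : Prop :=
  IsAntiderivation d ∧ d (xg 0) = 0 ∧ d (xg 1) = 0 ∧ d (xg 2) = -(xg 0 * xg 1) ∧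
    (∀ j, d (yg j) = 0)

/-- `d` is the map `δ_t`: the antiderivation with `δ_t x₁ = δ_t x₂ = 0`,
`δ_t x₃ = t₂₁ x₁∧y₁ − t₁₁ x₂∧y₁ + t₂₂ x₁∧y₂ − t₁₂ x₂∧y₂`, `δ_t y₁ = δ_t y₂ = 0`,
`δ_t y₃ = −y₁∧y₂`. -/
def IsDelta (t11 t12 t21 t22 : ℂ) (d : Lam →ₗ[ℂ] Lam) : Prop :=
  IsAntiderivation d ∧ d (xg 0) = 0 ∧ d (xg 1) = 0 ∧
    d (xg 2) = t21 • (xg 0 * yg 0) - t11 • (xg 1 * yg 0)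
      + t22 • (xg 0 * yg 1) - t12 • (xg 1 * yg 1) ∧
    d (yg 0) = 0 ∧ d (yg 1) = 0 ∧ d (yg 2) = -(yg 0 * yg 1)

/-- The dimension of the quotient of the subspace `K` by (its intersection with)
the subspace `I`; when `I ⊆ K` this is `dim (K / I)`. -/
def quotDim (K I : Submodule ℂ Lam) : ℕ :=
  Module.finrank ℂ (↥K ⧸ Submodule.comap K.subtype I)

namespace ExteriorAlgebra

variable {R M : Type*} [CommRing R] [AddCommGroup M] [Module R M]

/-- Pairs the degree-`n` part with `f 0 ∧ ⋯ ∧ f (n-1)`; for coordinate forms this reads off the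
coefficient of the corresponding monomial. -/
def wedgeDual {n : ℕ} (f : Fin n → Module.Dual R M) : Module.Dual R (ExteriorAlgebra R M) :=
  liftAlternating fun i => if h : i = n then
    ((Matrix.detRowAlternating.compLinearMap (LinearMap.pi f)).domDomCongr (finCongr h.symm))
  else 0

theorem wedgeDual_ιMulti {n : ℕ} (f : Fin n → Module.Dual R M) (v : Fin n → M) :
    wedgeDual f (ιMulti R n v) = (Matrix.of fun i j => f j (v i)).det := by
  rw [wedgeDual, liftAlternating_apply_ιMulti, dif_pos rfl]
  rfl

theorem wedgeDual_ι_mul_ι (f : Fin 2 → Module.Dual R M) (u v : M) :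
    wedgeDual f (ι R u * ι R v) = f 0 u * f 1 v - f 1 u * f 0 v := by
  have : ι R u * ι R v = ιMulti R 2 ![u, v] := by simp [ιMulti_apply]
  rw [this, wedgeDual_ιMulti, Matrix.det_fin_two]
  simp

theorem wedgeDual_ι_mul_ι_mul_ι (f : Fin 3 → Module.Dual R M) (u v w : M) :
    wedgeDual f (ι R u * ι R v * ι R w) =
      Matrix.det !![f 0 u, f 1 u, f 2 u; f 0 v, f 1 v, f 2 v; f 0 w, f 1 w, f 2 w] := by
  have : ι R u * ι R v * ι R w = ιMulti R 3 ![u, v, w] := by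
    simp [ιMulti_apply, mul_assoc]
  rw [this, wedgeDual_ιMulti]
  congr 1
  ext i j
  fin_cases i <;> fin_cases j <;> rfl

end ExteriorAlgebra

theorem LinearMap.finrank_map_add_finrank_ker_inf {K V W : Type*} [DivisionRing K]
    [AddCommGroup V] [Module K V] [AddCommGroup W] [Module K W] (f : V →ₗ[K] W)
    (p : Submodule K V) [FiniteDimensional K p] :
    Module.finrank K (p.map f) + Module.finrank K ↥(LinearMap.ker f ⊓ p) =
      Module.finrank K p := by
  have h := (f.domRestrict p).finrank_range_add_finrank_ker
  rw [LinearMap.range_domRestrict, LinearMap.ker_domRestrict] at h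
  rwa [← Submodule.finrank_map_subtype_eq, Submodule.map_comap_subtype, inf_comm] at h

theorem xg_mem_degComp_one (i : Fin 3) : xg i ∈ degComp 1 := by
  rw [degComp, pow_one]; exact ⟨_, rfl⟩

theorem IsAntiderivation.map_mul_of_mem_degComp_one {d : Lam →ₗ[ℂ] Lam}
    (hd : IsAntiderivation d) {a : Lam} (ha : a ∈ degComp 1) (b : Lam) :
    d (a * b) = d a * b - a * d b := by
  rw [hd 1 a ha b, pow_one, neg_one_smul, ← sub_eq_add_neg]

theorem wedgeDual_xg_mul_yg (a a' b b' : Fin 3) :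
    wedgeDual ![LinearMap.proj (Fin.castAdd 3 a'), LinearMap.proj (Fin.natAdd 3 b')]
      (xg a * yg b) = if (a', b') = (a, b) then 1 else 0 := by
  have hxy : (a' : ℕ) ≠ b + 3 := by omega
  simp [xg, yg, wedgeDual_ι_mul_ι, Pi.single_apply, Fin.ext_iff, hxy]
  split_ifs <;> simp_all

theorem bigraded_one_one :
    bigraded 1 1 = Submodule.span ℂ (Set.range fun p : Fin 3 × Fin 3 => xg p.1 * yg p.2) := by
  rw [bigraded]
  congr 1
  ext m
  simp only [Set.mem_ofPred_eq, Set.mem_range, Nat.cast_eq_one, Finset.card_eq_one]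
  constructor
  · rintro ⟨s, u, ⟨a, rfl⟩, ⟨b, rfl⟩, rfl⟩
    exact ⟨(a, b), by simp [monom]⟩
  · rintro ⟨⟨a, b⟩, rfl⟩
    exact ⟨{a}, {b}, ⟨a, rfl⟩, ⟨b, rfl⟩, by simp [monom]⟩

theorem linearIndependent_xg_mul_yg :
    LinearIndependent ℂ fun p : Fin 3 × Fin 3 => xg p.1 * yg p.2 := by
  refine .of_pairwise_dual_eq_zero_one _
    (fun p => wedgeDual ![LinearMap.proj (Fin.castAdd 3 p.1), LinearMap.proj (Fin.natAdd 3 p.2)])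
    (fun p q hpq => ?_) (fun p => ?_) <;> beta_reduce
  · rw [wedgeDual_xg_mul_yg, Prod.mk.eta, Prod.mk.eta, if_neg hpq]
  · rw [wedgeDual_xg_mul_yg, if_pos rfl]

theorem finrank_bigraded_one_one : Module.finrank ℂ (bigraded 1 1) = 9 := by
  rw [bigraded_one_one, finrank_span_eq_card linearIndependent_xg_mul_yg]
  simp

instance : FiniteDimensional ℂ (bigraded 1 1) := by
  rw [bigraded_one_one]
  exact FiniteDimensional.span_of_finite ℂ (Set.finite_range _)

theorem yg_mul_self (j : Fin 3) : yg j * yg j = 0 := ι_sq_zero _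

theorem yg_mul_yg_swap (j k : Fin 3) : yg j * yg k = -(yg k * yg j) :=
  eq_neg_of_add_eq_zero_left (ι_add_mul_swap _ _)

namespace IsDelta

variable {t11 t12 t21 t22 : ℂ} {delta : Lam →ₗ[ℂ] Lam} (h : IsDelta t11 t12 t21 t22 delta)
include h

theorem map_xg_two :
    delta (xg 2) = t21 • (xg 0 * yg 0) - t11 • (xg 1 * yg 0)
      + t22 • (xg 0 * yg 1) - t12 • (xg 1 * yg 1) :=
  h.2.2.2.1

theorem map_yg_two : delta (yg 2) = -(yg 0 * yg 1) :=
  h.2.2.2.2.2.2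

theorem map_xg_of_ne_two {i : Fin 3} (hi : i ≠ 2) : delta (xg i) = 0 := by
  obtain ⟨-, h0, h1, -⟩ := h
  fin_cases i
  exacts [h0, h1, absurd rfl hi]

theorem map_yg_of_ne_two {j : Fin 3} (hj : j ≠ 2) : delta (yg j) = 0 := by
  obtain ⟨-, -, -, -, h0, h1, -⟩ := h
  fin_cases j
  exacts [h0, h1, absurd rfl hj]

theorem map_xg_mul (i : Fin 3) (b : Lam) :
    delta (xg i * b) = delta (xg i) * b - xg i * delta b :=
  h.1.map_mul_of_mem_degComp_one (xg_mem_degComp_one i) b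

theorem map_xg_mul_yg_of_ne_two {i j : Fin 3} (hi : i ≠ 2) (hj : j ≠ 2) :
    delta (xg i * yg j) = 0 := by
  rw [h.map_xg_mul, h.map_xg_of_ne_two hi, h.map_yg_of_ne_two hj, zero_mul, mul_zero, sub_zero]

theorem map_xg_mul_yg_two (i : Fin 3) :
    delta (xg i * yg 2) = delta (xg i) * yg 2 + xg i * yg 0 * yg 1 := by
  rw [h.map_xg_mul, h.map_yg_two, mul_neg, sub_neg_eq_add, mul_assoc]

theorem map_xg_two_mul_yg_zero :
    delta (xg 2 * yg 0) = t12 • delta (xg 1 * yg 2) - t22 • delta (xg 0 * yg 2) := by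
  rw [h.map_xg_mul, h.map_xg_two, h.map_xg_mul_yg_two, h.map_xg_mul_yg_two,
    h.map_xg_of_ne_two (by decide), h.map_xg_of_ne_two (by decide),
    h.map_yg_of_ne_two (by decide)]
  simp only [add_mul, sub_mul, smul_mul_assoc, mul_assoc, yg_mul_self, zero_mul,
    yg_mul_yg_swap 1 0, mul_zero, smul_zero, mul_neg, smul_neg]
  module

theorem map_xg_two_mul_yg_one :
    delta (xg 2 * yg 1) = t21 • delta (xg 0 * yg 2) - t11 • delta (xg 1 * yg 2) := by
  rw [h.map_xg_mul, h.map_xg_two, h.map_xg_mul_yg_two, h.map_xg_mul_yg_two,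
    h.map_xg_of_ne_two (by decide), h.map_xg_of_ne_two (by decide),
    h.map_yg_of_ne_two (by decide)]
  simp only [add_mul, sub_mul, smul_mul_assoc, mul_assoc, yg_mul_self, zero_mul, mul_zero,
    smul_zero]
  module

theorem map_xg_two_mul_yg_mem_span {j : Fin 3} (hj : j ≠ 2) :
    delta (xg 2 * yg j) ∈
      Submodule.span ℂ {delta (xg 0 * yg 2), delta (xg 1 * yg 2)} := by
  rw [Submodule.mem_span_pair]
  match j, hj with
  | 0, _ => exact ⟨-t22, t12, by rw [h.map_xg_two_mul_yg_zero]; module⟩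
  | 1, _ => exact ⟨t21, -t11, by rw [h.map_xg_two_mul_yg_one]; module⟩
  | 2, hj => exact absurd rfl hj

theorem linearIndependent_map_xg_mul_yg_two :
    LinearIndependent ℂ fun i => delta (xg i * yg 2) := by
  have hdual (k i : Fin 3) : wedgeDual ![LinearMap.proj (Fin.castAdd 3 k),
      LinearMap.proj (Fin.natAdd 3 (0 : Fin 3)), LinearMap.proj (Fin.natAdd 3 (1 : Fin 3))]
      (delta (xg i * yg 2)) = if k = i then 1 else 0 := by
    rw [h.map_xg_mul_yg_two]
    obtain rfl | rfl | rfl : i = 0 ∨ i = 1 ∨ i = 2 := by fin_cases i <;> simp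
    all_goals first | rw [h.map_xg_two] | rw [h.map_xg_of_ne_two (by decide)]
    all_goals fin_cases k <;>
      simp [xg, yg, add_mul, sub_mul, wedgeDual_ι_mul_ι_mul_ι, Matrix.det_fin_three]
  exact .of_pairwise_dual_eq_zero_one _ _ (fun k i hki => (hdual k i).trans (if_neg hki))
    (fun k => (hdual k k).trans (if_pos rfl))

theorem map_span_eq_span_pair :
    Submodule.map delta (Submodule.span ℂ {xg 0 * yg 2, xg 1 * yg 2, xg 2 * yg 0, xg 2 * yg 1}) =
      Submodule.span ℂ {delta (xg 0 * yg 2), delta (xg 1 * yg 2)} := by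
  rw [Submodule.map_span, Set.image_insert_eq, Set.image_insert_eq, Set.image_insert_eq,
    Set.image_singleton]
  refine le_antisymm (Submodule.span_le.2 ?_)
    (Submodule.span_mono (by simp [Set.insert_subset_iff]))
  simp only [Set.insert_subset_iff, Set.singleton_subset_iff, SetLike.mem_coe]
  exact ⟨Submodule.subset_span (by simp), Submodule.subset_span (by simp),
    h.map_xg_two_mul_yg_mem_span (by decide), h.map_xg_two_mul_yg_mem_span (by decide)⟩

theorem map_bigraded_one_one :
    Submodule.map delta (bigraded 1 1) =
      Submodule.span ℂ (Set.range fun i => delta (xg i * yg 2)) := by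
  rw [bigraded_one_one, Submodule.map_span, ← Set.range_comp]
  refine le_antisymm (Submodule.span_le.2 (Set.range_subset_iff.2 fun ⟨a, b⟩ => ?_))
    (Submodule.span_mono (Set.range_subset_iff.2 fun i => ⟨(i, 2), rfl⟩))
  by_cases hb : b = 2
  · subst hb
    exact Submodule.subset_span ⟨a, rfl⟩
  by_cases ha : a = 2
  · subst ha
    refine Submodule.span_mono ?_ (h.map_xg_two_mul_yg_mem_span hb)
    simp [Set.insert_subset_iff]
  · simp [h.map_xg_mul_yg_of_ne_two ha hb]

end IsDelta

theorem stmt3_general (t11 t12 t21 t22 : ℂ) (delta : Lam →ₗ[ℂ] Lam)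
    (hdelta : IsDelta t11 t12 t21 t22 delta) :
    Module.finrank ℂ ↥(Submodule.map delta (Submodule.span ℂ
      {xg 0 * yg 2, xg 1 * yg 2, xg 2 * yg 0, xg 2 * yg 1})) = 2 ∧
    Module.finrank ℂ ↥(Submodule.map delta (bigraded 1 1)) = 3 ∧
    Module.finrank ℂ ↥(LinearMap.ker delta ⊓ bigraded 1 1) = 6 := by
  have hli := hdelta.linearIndependent_map_xg_mul_yg_two
  have hrank : Module.finrank ℂ ↥(Submodule.map delta (bigraded 1 1)) = 3 := by
    rw [hdelta.map_bigraded_one_one, finrank_span_eq_card hli, Fintype.card_fin]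
  refine ⟨?_, hrank, ?_⟩
  · have hpair : Set.range ((fun i => delta (xg i * yg 2)) ∘ ![0, 1]) =
        {delta (xg 0 * yg 2), delta (xg 1 * yg 2)} := by
      rw [Set.range_comp, Matrix.range_cons_cons_empty, Set.image_pair]
    rw [hdelta.map_span_eq_span_pair, ← hpair, finrank_span_eq_card (hli.comp _ (by decide)),
      Fintype.card_fin]
  · have hsum := delta.finrank_map_add_finrank_ker_inf (bigraded 1 1)
    rw [hrank, finrank_bigraded_one_one] at hsum
    omega

/-- for every `t`, the restriction of `δ_t` to the subspace spanned by
`x₁∧y₃, x₂∧y₃, x₃∧y₁, x₃∧y₂` has rank exactly `2`; consequently `δ_t(Λ^{1,1})` has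
dimension `3` and `ker δ_t ∩ Λ^{1,1}` has dimension `6`. -/
theorem stmt3 (t11 t12 t21 t22 : ℂ) (del delta : Lam →ₗ[ℂ] Lam)
    (hdel : IsDel del) (hdelta : IsDelta t11 t12 t21 t22 delta) :
    Module.finrank ℂ ↥(Submodule.map delta (Submodule.span ℂ
      {xg 0 * yg 2, xg 1 * yg 2, xg 2 * yg 0, xg 2 * yg 1})) = 2 ∧
    Module.finrank ℂ ↥(Submodule.map delta (bigraded 1 1)) = 3 ∧
    Module.finrank ℂ ↥(LinearMap.ker delta ⊓ bigraded 1 1) = 6 :=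
  stmt3_general t11 t12 t21 t22 delta hdelta
end
end

section
/- For every t ∈ ℂ⁴ (with no restriction on the parameters), the dimension of δ_t(Λ^{2,1}) equals 3; equivalently ker(δ_t) ∩ Λ^{2,1} has dimension 6. -/
noncomputable section

open ExteriorAlgebra

-- auxiliary development
def ee (i : Fin 6) : Lam := ExteriorAlgebra.ι ℂ (Pi.single i 1)

def wedge {k : ℕ} (l : Fin k → Fin 6) : Lam :=
  ExteriorAlgebra.ιMulti ℂ k (fun p => Pi.single (l p) 1)

def altF (k : ℕ) (l : Fin k → Fin 6) : (Fin 6 → ℂ) [⋀^Fin k]→ₗ[ℂ] ℂ :=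
  Matrix.detRowAlternating.compLinearMap (LinearMap.funLeft ℂ ℂ l)

def Fl (k : ℕ) (l : Fin k → Fin 6) : Lam →ₗ[ℂ] ℂ :=
  ExteriorAlgebra.liftAlternating (Pi.single k (altF k l))

lemma Fl_wedge {k : ℕ} (l l' : Fin k → Fin 6) :
    Fl k l (wedge l') = Matrix.det (Matrix.of fun p q => if l' p = l q then (1:ℂ) else 0) := by
  rw [wedge, Fl, ExteriorAlgebra.liftAlternating_apply_ιMulti, Pi.single_eq_same]
  simp only [altF, AlternatingMap.compLinearMap_apply]
  have : (fun p => (LinearMap.funLeft ℂ ℂ l) (Pi.single (l' p) (1:ℂ))) =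
      (Matrix.of fun p q => if l' p = l q then (1:ℂ) else 0) := by
    ext p q
    simp [LinearMap.funLeft_apply, Pi.single_apply, eq_comm]
  rw [this]
  rfl

lemma Fl_wedge_self {k : ℕ} (l : Fin k → Fin 6) (hl : Function.Injective l) :
    Fl k l (wedge l) = 1 := by
  rw [Fl_wedge]
  have : (Matrix.of fun p q => if l p = l q then (1:ℂ) else 0) = (1 : Matrix (Fin k) (Fin k) ℂ) := by
    ext p q
    simp [Matrix.one_apply, hl.eq_iff]
  rw [this, Matrix.det_one]

lemma Fl_wedge_zero {k : ℕ} (l l' : Fin k → Fin 6) (p : Fin k) (h : ∀ q, l' p ≠ l q) :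
    Fl k l (wedge l') = 0 := by
  rw [Fl_wedge]
  apply Matrix.det_eq_zero_of_row_eq_zero p
  intro q
  simp [h q]

lemma wedge3 (a b c : Fin 6) : wedge ![a,b,c] = ee a * ee b * ee c := by
  rw [wedge, ExteriorAlgebra.ιMulti_apply]
  simp [List.ofFn_succ, ee, mul_assoc]

lemma wedge4 (a b c d : Fin 6) : wedge ![a,b,c,d] = ee a * ee b * ee c * ee d := by
  rw [wedge, ExteriorAlgebra.ιMulti_apply]
  simp [List.ofFn_succ, ee, mul_assoc]

lemma ee_sq (a : Fin 6) : ee a * ee a = 0 := ExteriorAlgebra.ι_sq_zero _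

lemma ee_swap (a b : Fin 6) : ee a * ee b = -(ee b * ee a) := by
  have := ExteriorAlgebra.ι_add_mul_swap (R := ℂ) (Pi.single a (1:ℂ) : Fin 6 → ℂ) (Pi.single b 1)
  have h2 : ee a * ee b + ee b * ee a = 0 := this
  linear_combination (norm := noncomm_ring) h2

lemma xg_ee (i : Fin 3) : xg i = ee (Fin.castAdd 3 i) := rfl
lemma yg_ee (j : Fin 3) : yg j = ee (Fin.natAdd 3 j) := rfl

lemma xg0 : xg 0 = ee 0 := rfl
lemma xg1 : xg 1 = ee 1 := rfl
lemma xg2 : xg 2 = ee 2 := rfl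
lemma yg0 : yg 0 = ee 3 := rfl
lemma yg1 : yg 1 = ee 4 := rfl
lemma yg2 : yg 2 = ee 5 := rfl

lemma ee_mem1 (a : Fin 6) : ee a ∈ degComp 1 := by
  rw [degComp, pow_one]
  exact ⟨_, rfl⟩

lemma ee_mem2 (a b : Fin 6) : ee a * ee b ∈ degComp 2 := by
  rw [degComp, pow_two]
  exact Submodule.mul_mem_mul ⟨_, rfl⟩ ⟨_, rfl⟩

lemma sw (a b : Fin 6) (z : Lam) : ee a * (ee b * z) = -(ee b * (ee a * z)) := by
  rw [← mul_assoc, ee_swap a b, ← mul_assoc, neg_mul]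

lemma sq' (a : Fin 6) (z : Lam) : ee a * (ee a * z) = 0 := by
  rw [← mul_assoc, ee_sq, zero_mul]

section delta
variable {t11 t12 t21 t22 : ℂ} {d : Lam →ₗ[ℂ] Lam} (hd : IsDelta t11 t12 t21 t22 d)
include hd

lemma d_mul1 (a : Fin 6) (b : Lam) : d (ee a * b) = d (ee a) * b - ee a * d b := by
  have := hd.1 1 (ee a) (ee_mem1 a) b
  simpa [sub_eq_add_neg] using this

lemma d_mul2 (a b : Fin 6) (c : Lam) :
    d (ee a * ee b * c) = d (ee a * ee b) * c + ee a * ee b * d c := by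
  have := hd.1 2 (ee a * ee b) (ee_mem2 a b) c
  simpa using this

lemma d_x0 : d (ee 0) = 0 := hd.2.1
lemma d_x1 : d (ee 1) = 0 := hd.2.2.1
lemma d_y0 : d (ee 3) = 0 := hd.2.2.2.2.1
lemma d_y1 : d (ee 4) = 0 := hd.2.2.2.2.2.1
lemma d_y2 : d (ee 5) = -(ee 3 * ee 4) := hd.2.2.2.2.2.2
lemma d_x2 : d (ee 2) = t21 • (ee 0 * ee 3) - t11 • (ee 1 * ee 3)
    + t22 • (ee 0 * ee 4) - t12 • (ee 1 * ee 4) := hd.2.2.2.1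

lemma d_01 : d (ee 0 * ee 1) = 0 := by
  rw [d_mul1 hd, d_x0 hd, d_x1 hd]; simp

lemma d_02 : d (ee 0 * ee 2) = t11 • (ee 0 * ee 1 * ee 3) + t12 • (ee 0 * ee 1 * ee 4) := by
  rw [d_mul1 hd, d_x0 hd, d_x2 hd]
  simp only [mul_sub, mul_add, mul_smul_comm, sq' 0, sw 0 1, zero_mul, smul_zero,
    mul_assoc]
  module

lemma d_12 : d (ee 1 * ee 2) = t21 • (ee 0 * ee 1 * ee 3) + t22 • (ee 0 * ee 1 * ee 4) := by
  rw [d_mul1 hd, d_x1 hd, d_x2 hd]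
  simp only [mul_sub, mul_add, mul_smul_comm, sq' 1, sw 1 0, zero_mul, smul_zero,
    mul_assoc]
  module

end delta

section delta2
variable {t11 t12 t21 t22 : ℂ} {d : Lam →ₗ[ℂ] Lam} (hd : IsDelta t11 t12 t21 t22 d)
include hd

lemma dm1 : d (ee 0 * ee 1 * ee 3) = 0 := by
  rw [d_mul2 hd, d_01 hd, d_y0 hd]; simp

lemma dm2 : d (ee 0 * ee 1 * ee 4) = 0 := by
  rw [d_mul2 hd, d_01 hd, d_y1 hd]; simp

lemma dm3 : d (ee 0 * ee 1 * ee 5) = -wedge ![0,1,3,4] := by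
  rw [d_mul2 hd, d_01 hd, d_y2 hd, wedge4]
  simp [mul_assoc]

lemma dm4 : d (ee 0 * ee 2 * ee 3) = -t12 • wedge ![0,1,3,4] := by
  rw [d_mul2 hd, d_02 hd, d_y0 hd, wedge4]
  simp only [mul_zero, add_zero, add_mul, smul_mul_assoc, mul_assoc]
  rw [ee_swap 4 3]
  simp only [ee_sq, mul_zero, mul_neg, smul_neg, add_zero, zero_add, smul_zero]
  module

lemma dm5 : d (ee 0 * ee 2 * ee 4) = t11 • wedge ![0,1,3,4] := by
  rw [d_mul2 hd, d_02 hd, d_y1 hd, wedge4]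
  simp only [mul_zero, add_zero, add_mul, smul_mul_assoc, mul_assoc, ee_sq, smul_zero,
    zero_add]

lemma dm6 : d (ee 0 * ee 2 * ee 5) =
    t11 • wedge ![0,1,3,5] + t12 • wedge ![0,1,4,5] - wedge ![0,2,3,4] := by
  rw [d_mul2 hd, d_02 hd, d_y2 hd, wedge4, wedge4, wedge4]
  simp only [add_mul, smul_mul_assoc, mul_assoc, mul_neg]
  module

lemma dm7 : d (ee 1 * ee 2 * ee 3) = -t22 • wedge ![0,1,3,4] := by
  rw [d_mul2 hd, d_12 hd, d_y0 hd, wedge4]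
  simp only [mul_zero, add_zero, add_mul, smul_mul_assoc, mul_assoc]
  rw [ee_swap 4 3]
  simp only [ee_sq, mul_zero, mul_neg, smul_neg, add_zero, zero_add, smul_zero]
  module

lemma dm8 : d (ee 1 * ee 2 * ee 4) = t21 • wedge ![0,1,3,4] := by
  rw [d_mul2 hd, d_12 hd, d_y1 hd, wedge4]
  simp only [mul_zero, add_zero, add_mul, smul_mul_assoc, mul_assoc, ee_sq, smul_zero,
    zero_add]

lemma dm9 : d (ee 1 * ee 2 * ee 5) =
    t21 • wedge ![0,1,3,5] + t22 • wedge ![0,1,4,5] - wedge ![1,2,3,4] := by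
  rw [d_mul2 hd, d_12 hd, d_y2 hd, wedge4, wedge4, wedge4]
  simp only [add_mul, smul_mul_assoc, mul_assoc, mul_neg]
  module

end delta2

lemma monom_eq {s u : Finset (Fin 3)} {i j c : Fin 3}
    (hs : s.sort (· ≤ ·) = [i, j]) (hu : u.sort (· ≤ ·) = [c]) :
    monom s u = ee (Fin.castAdd 3 i) * ee (Fin.castAdd 3 j) * ee (Fin.natAdd 3 c) := by
  rw [monom, hs, hu]
  simp [xg_ee, yg_ee, mul_assoc]

def M9 : Fin 9 → Lam :=
  ![ee 0 * ee 1 * ee 3, ee 0 * ee 1 * ee 4, ee 0 * ee 1 * ee 5,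
    ee 0 * ee 2 * ee 3, ee 0 * ee 2 * ee 4, ee 0 * ee 2 * ee 5,
    ee 1 * ee 2 * ee 3, ee 1 * ee 2 * ee 4, ee 1 * ee 2 * ee 5]

lemma bigraded21 : bigraded 2 1 = Submodule.span ℂ (Set.range M9) := by
  have hset : {m : Lam | ∃ s u : Finset (Fin 3),
      (s.card : ℤ) = 2 ∧ (u.card : ℤ) = 1 ∧ m = monom s u} = Set.range M9 := by
    ext m
    constructor
    · rintro ⟨s, u, hs, hu, rfl⟩
      have hs' : s = {0,1} ∨ s = {0,2} ∨ s = {1,2} := by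
        revert s; decide
      have hu' : u = {0} ∨ u = {1} ∨ u = {2} := by
        revert u; decide
      have e01 : ({0,1} : Finset (Fin 3)).sort (· ≤ ·) = [0,1] := by
        simp [Finset.sort_insert, Finset.sort_singleton]
      have e02 : ({0,2} : Finset (Fin 3)).sort (· ≤ ·) = [0,2] := by
        simp [Finset.sort_insert, Finset.sort_singleton]
      have e12 : ({1,2} : Finset (Fin 3)).sort (· ≤ ·) = [1,2] := by
        simp [Finset.sort_insert, Finset.sort_singleton]
      have f0 : ({0} : Finset (Fin 3)).sort (· ≤ ·) = [0] := by simp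
      have f1 : ({1} : Finset (Fin 3)).sort (· ≤ ·) = [1] := by simp
      have f2 : ({2} : Finset (Fin 3)).sort (· ≤ ·) = [2] := by simp
      rcases hs' with rfl | rfl | rfl <;> rcases hu' with rfl | rfl | rfl
      · exact ⟨0, by rw [monom_eq e01 f0]; rfl⟩
      · exact ⟨1, by rw [monom_eq e01 f1]; rfl⟩
      · exact ⟨2, by rw [monom_eq e01 f2]; rfl⟩
      · exact ⟨3, by rw [monom_eq e02 f0]; rfl⟩
      · exact ⟨4, by rw [monom_eq e02 f1]; rfl⟩
      · exact ⟨5, by rw [monom_eq e02 f2]; rfl⟩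
      · exact ⟨6, by rw [monom_eq e12 f0]; rfl⟩
      · exact ⟨7, by rw [monom_eq e12 f1]; rfl⟩
      · exact ⟨8, by rw [monom_eq e12 f2]; rfl⟩
    · rintro ⟨k, rfl⟩
      have e01 : ({0,1} : Finset (Fin 3)).sort (· ≤ ·) = [0,1] := by
        simp [Finset.sort_insert, Finset.sort_singleton]
      have e02 : ({0,2} : Finset (Fin 3)).sort (· ≤ ·) = [0,2] := by
        simp [Finset.sort_insert, Finset.sort_singleton]
      have e12 : ({1,2} : Finset (Fin 3)).sort (· ≤ ·) = [1,2] := by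
        simp [Finset.sort_insert, Finset.sort_singleton]
      have f0 : ({0} : Finset (Fin 3)).sort (· ≤ ·) = [0] := by simp
      have f1 : ({1} : Finset (Fin 3)).sort (· ≤ ·) = [1] := by simp
      have f2 : ({2} : Finset (Fin 3)).sort (· ≤ ·) = [2] := by simp
      fin_cases k
      · exact ⟨{0,1}, {0}, by decide, by decide, by rw [monom_eq e01 f0]; rfl⟩
      · exact ⟨{0,1}, {1}, by decide, by decide, by rw [monom_eq e01 f1]; rfl⟩
      · exact ⟨{0,1}, {2}, by decide, by decide, by rw [monom_eq e01 f2]; rfl⟩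
      · exact ⟨{0,2}, {0}, by decide, by decide, by rw [monom_eq e02 f0]; rfl⟩
      · exact ⟨{0,2}, {1}, by decide, by decide, by rw [monom_eq e02 f1]; rfl⟩
      · exact ⟨{0,2}, {2}, by decide, by decide, by rw [monom_eq e02 f2]; rfl⟩
      · exact ⟨{1,2}, {0}, by decide, by decide, by rw [monom_eq e12 f0]; rfl⟩
      · exact ⟨{1,2}, {1}, by decide, by decide, by rw [monom_eq e12 f1]; rfl⟩
      · exact ⟨{1,2}, {2}, by decide, by decide, by rw [monom_eq e12 f2]; rfl⟩
  rw [bigraded, hset]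

def v9 : Fin 9 → (Fin 3 → Fin 6) :=
  ![![0,1,3], ![0,1,4], ![0,1,5], ![0,2,3], ![0,2,4], ![0,2,5],
    ![1,2,3], ![1,2,4], ![1,2,5]]

lemma M9_wedge : M9 = fun k => wedge (v9 k) := by
  funext k
  fin_cases k
  · exact (wedge3 0 1 3).symm
  · exact (wedge3 0 1 4).symm
  · exact (wedge3 0 1 5).symm
  · exact (wedge3 0 2 3).symm
  · exact (wedge3 0 2 4).symm
  · exact (wedge3 0 2 5).symm
  · exact (wedge3 1 2 3).symm
  · exact (wedge3 1 2 4).symm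
  · exact (wedge3 1 2 5).symm

lemma key9 (i j : Fin 9) : Fl 3 (v9 i) (wedge (v9 j)) = if j = i then 1 else 0 := by
  rcases eq_or_ne j i with rfl | h
  · rw [if_pos rfl]
    exact Fl_wedge_self (v9 j) (by revert j; decide)
  · rw [if_neg h]
    obtain ⟨p, hp⟩ : ∃ p, ∀ q, v9 j p ≠ v9 i q := by revert h; revert i j; decide
    exact Fl_wedge_zero _ _ p hp

lemma indep9 : LinearIndependent ℂ M9 := by
  rw [M9_wedge, Fintype.linearIndependent_iff]
  intro g hg i
  have := congrArg (Fl 3 (v9 i)) hg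
  rw [map_sum, map_zero] at this
  simp only [map_smul, key9, smul_eq_mul, mul_ite, mul_one, mul_zero] at this
  rwa [Finset.sum_ite_eq' Finset.univ i g, if_pos (Finset.mem_univ i)] at this

lemma finrank_b21 : Module.finrank ℂ ↥(bigraded 2 1) = 9 := by
  rw [bigraded21, finrank_span_eq_card indep9]
  simp

def u5 : Fin 5 → (Fin 4 → Fin 6) :=
  ![![0,1,3,4], ![0,1,3,5], ![0,1,4,5], ![0,2,3,4], ![1,2,3,4]]

lemma key5 (i j : Fin 5) : Fl 4 (u5 i) (wedge (u5 j)) = if j = i then 1 else 0 := by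
  rcases eq_or_ne j i with rfl | h
  · rw [if_pos rfl]
    exact Fl_wedge_self (u5 j) (by revert j; decide)
  · rw [if_neg h]
    obtain ⟨p, hp⟩ : ∃ p, ∀ q, u5 j p ≠ u5 i q := by revert h; revert i j; decide
    exact Fl_wedge_zero _ _ p hp

section image
variable (t11 t12 t21 t22 : ℂ)

def Av : Lam := wedge (u5 0)
def Bv : Lam := t11 • wedge (u5 1) + t12 • wedge (u5 2) - wedge (u5 3)
def Cv : Lam := t21 • wedge (u5 1) + t22 • wedge (u5 2) - wedge (u5 4)

def T3 : Fin 3 → Lam := ![Av, Bv t11 t12, Cv t21 t22]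

lemma indep3 : LinearIndependent ℂ (T3 t11 t12 t21 t22) := by
  rw [Fintype.linearIndependent_iff]
  intro g hg
  rw [Fin.sum_univ_three] at hg
  have h0 := congrArg (Fl 4 (u5 0)) hg
  have h1 := congrArg (Fl 4 (u5 3)) hg
  have h2 := congrArg (Fl 4 (u5 4)) hg
  simp only [T3, Matrix.cons_val_zero, Matrix.cons_val_one, Matrix.head_cons,
    Matrix.cons_val_two, Matrix.tail_cons, Av, Bv, Cv,
    map_add, map_sub, map_smul, map_zero, key5, smul_eq_mul] at h0 h1 h2
  simp (config := { decide := true }) at h0 h1 h2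
  intro i
  fin_cases i
  · exact h0
  · exact h1
  · exact h2
end image

section final
variable {t11 t12 t21 t22 : ℂ} {d : Lam →ₗ[ℂ] Lam} (hd : IsDelta t11 t12 t21 t22 d)
include hd

lemma image_eq :
    Submodule.map d (bigraded 2 1) = Submodule.span ℂ (Set.range (T3 t11 t12 t21 t22)) := by
  rw [bigraded21, Submodule.map_span]
  have hA : Av ∈ Submodule.span ℂ (Set.range (T3 t11 t12 t21 t22)) :=
    Submodule.subset_span ⟨0, rfl⟩
  have hB : Bv t11 t12 ∈ Submodule.span ℂ (Set.range (T3 t11 t12 t21 t22)) :=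
    Submodule.subset_span ⟨1, rfl⟩
  have hC : Cv t21 t22 ∈ Submodule.span ℂ (Set.range (T3 t11 t12 t21 t22)) :=
    Submodule.subset_span ⟨2, rfl⟩
  apply le_antisymm
  · rw [Submodule.span_le]
    rintro _ ⟨_, ⟨k, rfl⟩, rfl⟩
    fin_cases k
    · show d (ee 0 * ee 1 * ee 3) ∈ _
      rw [dm1 hd]; exact zero_mem _
    · show d (ee 0 * ee 1 * ee 4) ∈ _
      rw [dm2 hd]; exact zero_mem _
    · show d (ee 0 * ee 1 * ee 5) ∈ _
      rw [dm3 hd]; exact neg_mem hA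
    · show d (ee 0 * ee 2 * ee 3) ∈ _
      rw [dm4 hd]
      exact Submodule.smul_mem _ _ hA
    · show d (ee 0 * ee 2 * ee 4) ∈ _
      rw [dm5 hd]
      exact Submodule.smul_mem _ _ hA
    · show d (ee 0 * ee 2 * ee 5) ∈ _
      rw [dm6 hd]; exact hB
    · show d (ee 1 * ee 2 * ee 3) ∈ _
      rw [dm7 hd]
      exact Submodule.smul_mem _ _ hA
    · show d (ee 1 * ee 2 * ee 4) ∈ _
      rw [dm8 hd]
      exact Submodule.smul_mem _ _ hA
    · show d (ee 1 * ee 2 * ee 5) ∈ _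
      rw [dm9 hd]; exact hC
  · rw [Submodule.span_le]
    rintro _ ⟨k, rfl⟩
    fin_cases k
    · have h : T3 t11 t12 t21 t22 0 = -(d (M9 2)) := by
        rw [show d (M9 2) = d (ee 0 * ee 1 * ee 5) from rfl, dm3 hd, neg_neg]; rfl
      show T3 t11 t12 t21 t22 0 ∈ _
      rw [h]
      exact neg_mem (Submodule.subset_span ⟨M9 2, ⟨2, rfl⟩, rfl⟩)
    · have h : T3 t11 t12 t21 t22 1 = d (M9 5) := by
        rw [show d (M9 5) = d (ee 0 * ee 2 * ee 5) from rfl, dm6 hd]; rfl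
      show T3 t11 t12 t21 t22 1 ∈ _
      rw [h]
      exact Submodule.subset_span ⟨M9 5, ⟨5, rfl⟩, rfl⟩
    · have h : T3 t11 t12 t21 t22 2 = d (M9 8) := by
        rw [show d (M9 8) = d (ee 1 * ee 2 * ee 5) from rfl, dm9 hd]; rfl
      show T3 t11 t12 t21 t22 2 ∈ _
      rw [h]
      exact Submodule.subset_span ⟨M9 8, ⟨8, rfl⟩, rfl⟩

lemma finrank_image : Module.finrank ℂ ↥(Submodule.map d (bigraded 2 1)) = 3 := by
  rw [image_eq hd, finrank_span_eq_card (indep3 t11 t12 t21 t22)]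
  simp

lemma finrank_ker : Module.finrank ℂ ↥(LinearMap.ker d ⊓ bigraded 2 1) = 6 := by
  set B := bigraded 2 1 with hB
  haveI : FiniteDimensional ℂ ↥B := by
    rw [hB, bigraded21]
    exact FiniteDimensional.span_of_finite ℂ (Set.finite_range M9)
  set f : ↥B →ₗ[ℂ] Lam := d ∘ₗ B.subtype with hf
  have hrange : LinearMap.range f = Submodule.map d B := by
    rw [hf, LinearMap.range_comp, Submodule.range_subtype]
  have hker : LinearMap.ker f = Submodule.comap B.subtype (LinearMap.ker d) := by
    rw [hf, LinearMap.ker_comp]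
  have hcom : Submodule.comap B.subtype (LinearMap.ker d)
      = Submodule.comap B.subtype (LinearMap.ker d ⊓ B) := by
    rw [Submodule.comap_inf, Submodule.comap_subtype_self, inf_top_eq]
  have heq : Module.finrank ℂ ↥(LinearMap.ker f) =
      Module.finrank ℂ ↥(LinearMap.ker d ⊓ B) := by
    rw [hker, hcom]
    exact (Submodule.comapSubtypeEquivOfLe inf_le_right).finrank_eq
  have hrn := LinearMap.finrank_range_add_finrank_ker f
  rw [hrange, heq] at hrn
  have h3 : Module.finrank ℂ ↥(Submodule.map d B) = 3 := finrank_image hd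
  have h9 : Module.finrank ℂ ↥B = 9 := finrank_b21
  omega

end final


/-- for every `t`, `dim δ_t(Λ^{2,1}) = 3`; equivalently
`dim (ker δ_t ∩ Λ^{2,1}) = 6`. -/
theorem stmt4 (t11 t12 t21 t22 : ℂ) (del delta : Lam →ₗ[ℂ] Lam)
    (hdel : IsDel del) (hdelta : IsDelta t11 t12 t21 t22 delta) :
    Module.finrank ℂ ↥(Submodule.map delta (bigraded 2 1)) = 3 ∧
    Module.finrank ℂ ↥(LinearMap.ker delta ⊓ bigraded 2 1) = 6 :=
  ⟨finrank_image hdelta, finrank_ker hdelta⟩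
end
end

section
/- For every t ∈ ℂ⁴, the dimension of the deformed Dolbeault cohomology H^{2,2}(t) = (ker(δ_t) ∩ Λ^{2,2}) / δ_t(Λ^{2,1}) equals 6 if (t₁₁,t₁₂,t₂₁,t₂₂) = (0,0,0,0) and equals 5 otherwise. -/
noncomputable section

open ExteriorAlgebra

open Module

/-!
The monomials `x_{{i}ᶜ} y_{{j}ᶜ}` belong to the standard basis of `Λ`, so they form a basis of
`Λ^{2,2}`. By the Leibniz rule `δ_t` sends each of them to `0` or to `±t_{kl} x₁x₂y₁y₂y₃`, every
`t_{kl}` occurring once; hence `ker δ_t ∩ Λ^{2,2}` has dimension `9` for `t = 0` and `8`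
otherwise. The image `δ_t(Λ^{2,1})` lies in this kernel and is spanned by the three forms
`x_{{i}ᶜ} y₁y₂ − (terms in x₁x₂y₁y₃, x₁x₂y₂y₃)`, which are independent for every `t`.
-/

def gen (k : Fin 6) : Lam := ExteriorAlgebra.ι ℂ (Pi.single k 1)

lemma xg_eq_gen (i : Fin 3) : xg i = gen (Fin.castAdd 3 i) := rfl

lemma yg_eq_gen (j : Fin 3) : yg j = gen (Fin.natAdd 3 j) := rfl

lemma gen_mul_self (k : Fin 6) : gen k * gen k = 0 := ExteriorAlgebra.ι_sq_zero _

lemma gen_mul_gen_mul_self (k : Fin 6) (b : Lam) : gen k * (gen k * b) = 0 := by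
  rw [← mul_assoc, gen_mul_self, zero_mul]

lemma gen_mul_comm (j k : Fin 6) : gen k * gen j = -(gen j * gen k) :=
  eq_neg_of_add_eq_zero_left (ExteriorAlgebra.ι_add_mul_swap _ _)

lemma gen_mul_gen_mul_comm (j k : Fin 6) (b : Lam) :
    gen k * (gen j * b) = -(gen j * (gen k * b)) := by
  rw [← mul_assoc, gen_mul_comm j k, neg_mul, mul_assoc]

lemma IsAntiderivation.map_gen_mul {d : Lam →ₗ[ℂ] Lam} (hd : IsAntiderivation d) (k : Fin 6)
    (b : Lam) : d (gen k * b) = d (gen k) * b - gen k * d b := by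
  have hk : gen k ∈ degComp 1 := by
    rw [degComp, pow_one]
    exact ⟨_, rfl⟩
  simpa [sub_eq_add_neg] using hd 1 (gen k) hk b

lemma IsDelta.map_gen {t11 t12 t21 t22 : ℂ} {delta : Lam →ₗ[ℂ] Lam}
    (hδ : IsDelta t11 t12 t21 t22 delta) (k : Fin 6) :
    delta (gen k) = ![0, 0, t21 • (gen 0 * gen 3) - t11 • (gen 1 * gen 3)
      + t22 • (gen 0 * gen 4) - t12 • (gen 1 * gen 4), 0, 0, -(gen 3 * gen 4)] k := by
  obtain ⟨-, h0, h1, h2, h3, h4, h5⟩ := hδ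
  fin_cases k
  exacts [h0, h1, h2, h3, h4, h5]

lemma Finset.sort_eq_of_sortedLT {α : Type*} [LinearOrder α] {s : Finset α} {l : List α}
    (hl : l.SortedLT) (h : ∀ a, a ∈ l ↔ a ∈ s) : s.sort (· ≤ ·) = l :=
  (Finset.sortedLT_sort s).eq_of_mem_iff hl (by simp [h])

lemma sort_compl_singleton_fin_three (i : Fin 3) :
    ({i}ᶜ : Finset (Fin 3)).sort (· ≤ ·) = ![[1, 2], [0, 2], [0, 1]] i := by
  fin_cases i <;> exact Finset.sort_eq_of_sortedLT (by decide) (by decide)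

lemma sort_univ_fin_three : (Finset.univ : Finset (Fin 3)).sort (· ≤ ·) = [0, 1, 2] :=
  Finset.sort_eq_of_sortedLT (by decide) (by decide)

abbrev monomialBasis : Basis (Finset (Fin 6)) ℂ Lam :=
  (Pi.basisFun ℂ (Fin 6)).ExteriorAlgebra

lemma monomialBasis_apply (S : Finset (Fin 6)) :
    monomialBasis S = ((S.sort (· ≤ ·)).map gen).prod := by
  rw [ExteriorAlgebra.basis_apply_ofCard _ rfl, ExteriorAlgebra.ιMulti_family,
    ExteriorAlgebra.ιMulti_apply, List.ofFn_eq_map, ← Finset.listMap_orderEmbOfFin_finRange S rfl,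
    List.map_map]
  simp [gen, Function.comp_def, Set.powersetCard.ofFinEmbEquiv_symm_apply]

lemma monom_eq_monomialBasis (s u : Finset (Fin 3)) :
    monom s u = monomialBasis (s.map (Fin.castAddEmb 3) ∪ u.map (Fin.natAddEmb 3)) := by
  have hsort : (s.map (Fin.castAddEmb 3) ∪ u.map (Fin.natAddEmb 3)).sort (· ≤ ·) =
      (s.sort (· ≤ ·)).map (Fin.castAdd 3) ++ (u.sort (· ≤ ·)).map (Fin.natAdd 3) := by
    refine Finset.sort_eq_of_sortedLT ?_ fun a => by
      simp only [List.mem_append, List.mem_map, Finset.mem_sort, Finset.mem_union, Finset.mem_map]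
      rfl
    rw [List.sortedLT_iff_pairwise, List.pairwise_append, List.pairwise_map, List.pairwise_map]
    refine ⟨(Finset.sortedLT_sort s).pairwise.imp fun h => Fin.strictMono_castAdd 3 h,
      (Finset.sortedLT_sort u).pairwise.imp fun h => Fin.strictMono_natAdd 3 h, ?_⟩
    simp only [List.mem_map, Finset.mem_sort]
    rintro _ ⟨a, -, rfl⟩ _ ⟨b, -, rfl⟩
    exact Fin.lt_def.2 (by simp only [Fin.val_castAdd, Fin.val_natAdd]; omega)
  rw [monomialBasis_apply, hsort, List.map_append, List.prod_append, List.map_map, List.map_map]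
  rfl

def mon22 (p : Fin 3 × Fin 3) : Lam := monom {p.1}ᶜ {p.2}ᶜ

def mon21 (p : Fin 3 × Fin 3) : Lam := monom {p.1}ᶜ {p.2}

def x12y123 : Lam := monom {2}ᶜ Finset.univ

def index22 (p : Fin 3 × Fin 3) : Finset (Fin 6) :=
  ({p.1}ᶜ : Finset (Fin 3)).map (Fin.castAddEmb 3) ∪
    ({p.2}ᶜ : Finset (Fin 3)).map (Fin.natAddEmb 3)

lemma index22_injective : Function.Injective index22 := by decide

lemma mon22_eq_monomialBasis (p : Fin 3 × Fin 3) : mon22 p = monomialBasis (index22 p) :=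
  monom_eq_monomialBasis _ _

lemma linearIndependent_mon22 : LinearIndependent ℂ mon22 := by
  rw [show mon22 = monomialBasis ∘ index22 from funext mon22_eq_monomialBasis]
  exact monomialBasis.linearIndependent.comp _ index22_injective

lemma repr_mon22 (p q : Fin 3 × Fin 3) :
    monomialBasis.repr (mon22 q) (index22 p) = if q = p then 1 else 0 := by
  simp [mon22_eq_monomialBasis, Finsupp.single_apply, index22_injective.eq_iff]

lemma x12y123_ne_zero : x12y123 ≠ 0 := by
  rw [x12y123, monom_eq_monomialBasis]
  exact monomialBasis.ne_zero _

lemma bigraded_eq_span_range {p q : ℤ} {ι κ : Type*} (f : ι → Finset (Fin 3))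
    (g : κ → Finset (Fin 3)) (hf : ∀ s, (s.card : ℤ) = p ↔ ∃ i, s = f i)
    (hg : ∀ u, (u.card : ℤ) = q ↔ ∃ k, u = g k) :
    bigraded p q = Submodule.span ℂ (Set.range fun x : ι × κ => monom (f x.1) (g x.2)) := by
  rw [bigraded]
  congr 1
  ext m
  simp only [Set.mem_ofPred_eq, Set.mem_range, Prod.exists, hf, hg]
  constructor
  · rintro ⟨s, u, ⟨i, rfl⟩, ⟨k, rfl⟩, rfl⟩
    exact ⟨i, k, rfl⟩
  · rintro ⟨i, k, rfl⟩
    exact ⟨_, _, ⟨i, rfl⟩, ⟨k, rfl⟩, rfl⟩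

lemma card_eq_two_iff_eq_compl_singleton_fin_three :
    ∀ s : Finset (Fin 3), (s.card : ℤ) = 2 ↔ ∃ i, s = {i}ᶜ := by
  decide

lemma card_eq_one_iff_eq_singleton_fin_three :
    ∀ s : Finset (Fin 3), (s.card : ℤ) = 1 ↔ ∃ i, s = {i} := by
  decide

lemma bigraded_two_two : bigraded 2 2 = Submodule.span ℂ (Set.range mon22) :=
  bigraded_eq_span_range (fun i => {i}ᶜ) (fun j => {j}ᶜ)
    card_eq_two_iff_eq_compl_singleton_fin_three card_eq_two_iff_eq_compl_singleton_fin_three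

lemma bigraded_two_one : bigraded 2 1 = Submodule.span ℂ (Set.range mon21) :=
  bigraded_eq_span_range (fun i => {i}ᶜ) (fun j => {j})
    card_eq_two_iff_eq_compl_singleton_fin_three card_eq_one_iff_eq_singleton_fin_three

instance : FiniteDimensional ℂ Lam := .of_basis monomialBasis

section LinearAlgebra

variable {K V W : Type*} [Field K] [AddCommGroup V] [Module K V] [AddCommGroup W] [Module K W]

lemma Submodule.finrank_ker_inf_add_finrank_map (f : V →ₗ[K] W) (P : Submodule K V)
    [FiniteDimensional K P] :
    finrank K ↥(LinearMap.ker f ⊓ P) + finrank K ↥(P.map f) = finrank K P := by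
  rw [← LinearMap.range_domRestrict, inf_comm, ← Submodule.map_comap_subtype,
    Submodule.finrank_map_subtype_eq, ← LinearMap.ker_domRestrict, add_comm]
  exact LinearMap.finrank_range_add_finrank_ker _

lemma Submodule.finrank_quotient_comap_subtype_add_finrank {N P : Submodule K V}
    [FiniteDimensional K P] (h : N ≤ P) :
    finrank K (P ⧸ N.comap P.subtype) + finrank K N = finrank K P := by
  rw [← LinearEquiv.finrank_eq (Submodule.comapSubtypeEquivOfLe h)]
  exact Submodule.finrank_quotient_add_finrank _

open Classical in
lemma finrank_span_range_smul {ι : Type*} (c : ι → K) {v : V} (hv : v ≠ 0) :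
    finrank K (Submodule.span K (Set.range fun i => c i • v)) = if c = 0 then 0 else 1 := by
  split_ifs with hc
  · rw [Submodule.span_eq_bot.2 (by rintro _ ⟨i, rfl⟩; simp [hc]), finrank_bot]
  · obtain ⟨i, hi⟩ := Function.ne_iff.1 hc
    have hspan : Submodule.span K (Set.range fun i => c i • v) = K ∙ v := by
      refine le_antisymm (Submodule.span_le.2 ?_) (Submodule.span_singleton_le_iff_mem _ _ |>.2 ?_)
      · rintro _ ⟨j, rfl⟩
        exact Submodule.smul_mem _ _ (Submodule.mem_span_singleton_self v)
      · have h : c i • v ∈ Submodule.span K (Set.range fun i => c i • v) :=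
          Submodule.subset_span (Set.mem_range_self i)
        simpa only [inv_smul_smul₀ hi] using Submodule.smul_mem _ (c i)⁻¹ h
    rw [hspan, finrank_span_singleton hv]

end LinearAlgebra

section Delta

variable {t11 t12 t21 t22 : ℂ} {delta : Lam →ₗ[ℂ] Lam}

def deltaCoeff (t11 t12 t21 t22 : ℂ) (p : Fin 3 × Fin 3) : ℂ :=
  ![![t21, -t22, 0], ![t11, -t12, 0], ![0, 0, 0]] p.1 p.2

def exactForm (t11 t12 t21 t22 : ℂ) (i : Fin 3) : Lam :=
  mon22 (i, 2) - deltaCoeff t11 t12 t21 t22 (i, 0) • mon22 (2, 1)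
    + deltaCoeff t11 t12 t21 t22 (i, 1) • mon22 (2, 0)

-- `gen_mul_comm` loops as a simp lemma; only the transpositions `x₂x₁` and `y₂y₁` arise.
lemma delta_mon22 (hδ : IsDelta t11 t12 t21 t22 delta) (p : Fin 3 × Fin 3) :
    delta (mon22 p) = deltaCoeff t11 t12 t21 t22 p • x12y123 := by
  obtain ⟨i, j⟩ := p
  fin_cases i <;> fin_cases j <;>
    simp [mon22, x12y123, monom, deltaCoeff, sort_compl_singleton_fin_three, sort_univ_fin_three,
      xg_eq_gen, yg_eq_gen, hδ.1.map_gen_mul, hδ.map_gen, gen_mul_self, gen_mul_gen_mul_self,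
      gen_mul_gen_mul_comm 0 1, gen_mul_gen_mul_comm 3 4, mul_assoc, mul_add, add_mul, mul_sub,
      sub_mul]

lemma delta_mon21 (hδ : IsDelta t11 t12 t21 t22 delta) (i j : Fin 3) :
    delta (mon21 (i, j)) = ![deltaCoeff t11 t12 t21 t22 (i, 1) • mon22 (2, 2),
      deltaCoeff t11 t12 t21 t22 (i, 0) • mon22 (2, 2), -exactForm t11 t12 t21 t22 i] j := by
  fin_cases i <;> fin_cases j <;>
    simp [mon21, mon22, exactForm, monom, deltaCoeff, sort_compl_singleton_fin_three,
      xg_eq_gen, yg_eq_gen, hδ.1.map_gen_mul, hδ.map_gen, gen_mul_self, gen_mul_gen_mul_self,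
      gen_mul_comm 3 4, gen_mul_gen_mul_comm 0 1, mul_assoc, mul_add, add_mul, mul_sub,
      sub_mul] <;>
    module

lemma exactForm_two : exactForm t11 t12 t21 t22 2 = mon22 (2, 2) := by
  simp [exactForm, deltaCoeff]

lemma delta_exactForm (hδ : IsDelta t11 t12 t21 t22 delta) (i : Fin 3) :
    delta (exactForm t11 t12 t21 t22 i) = 0 := by
  fin_cases i <;> simp [exactForm, delta_mon22 hδ, deltaCoeff]

lemma exactForm_mem_bigraded (i : Fin 3) : exactForm t11 t12 t21 t22 i ∈ bigraded 2 2 := by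
  have hmem (p : Fin 3 × Fin 3) : mon22 p ∈ bigraded 2 2 :=
    bigraded_two_two ▸ Submodule.subset_span (Set.mem_range_self p)
  exact add_mem (sub_mem (hmem _) (Submodule.smul_mem _ _ (hmem _)))
    (Submodule.smul_mem _ _ (hmem _))

lemma map_delta_bigraded_two_one (hδ : IsDelta t11 t12 t21 t22 delta) :
    (bigraded 2 1).map delta = Submodule.span ℂ (Set.range (exactForm t11 t12 t21 t22)) := by
  rw [bigraded_two_one, Submodule.map_span, ← Set.range_comp]
  apply le_antisymm
  · rw [Submodule.span_le]
    rintro _ ⟨⟨i, j⟩, rfl⟩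
    have hmem (k : Fin 3) : exactForm t11 t12 t21 t22 k ∈
        Submodule.span ℂ (Set.range (exactForm t11 t12 t21 t22)) :=
      Submodule.subset_span (Set.mem_range_self k)
    have h22 := hmem 2
    rw [exactForm_two] at h22
    rw [Function.comp_apply, delta_mon21 hδ]
    fin_cases j
    exacts [Submodule.smul_mem _ _ h22, Submodule.smul_mem _ _ h22, neg_mem (hmem i)]
  · rw [Submodule.span_le]
    rintro _ ⟨i, rfl⟩
    have h : delta (mon21 (i, 2)) ∈ Submodule.span ℂ (Set.range (delta ∘ mon21)) :=
      Submodule.subset_span ⟨(i, 2), rfl⟩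
    simpa [delta_mon21 hδ] using h

lemma linearIndependent_exactForm : LinearIndependent ℂ (exactForm t11 t12 t21 t22) := by
  refine .of_pairwise_dual_eq_zero_one _ (fun k => monomialBasis.coord (index22 (k, 2))) ?_ ?_
  · intro k i hki
    simp [exactForm, repr_mon22, Ne.symm hki]
  · intro k
    simp [exactForm, repr_mon22]

lemma map_delta_bigraded_two_two (hδ : IsDelta t11 t12 t21 t22 delta) :
    (bigraded 2 2).map delta =
      Submodule.span ℂ (Set.range fun p => deltaCoeff t11 t12 t21 t22 p • x12y123) := by
  rw [bigraded_two_two, Submodule.map_span, ← Set.range_comp]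
  congr 2
  exact funext (delta_mon22 hδ)

lemma deltaCoeff_eq_zero_iff :
    deltaCoeff t11 t12 t21 t22 = 0 ↔ (t11, t12, t21, t22) = (0, 0, 0, 0) := by
  simp [deltaCoeff, funext_iff, Fin.forall_fin_succ, and_comm, and_assoc]

end Delta

theorem stmt11_general (t11 t12 t21 t22 : ℂ) (delta : Lam →ₗ[ℂ] Lam)
    (hdelta : IsDelta t11 t12 t21 t22 delta) :
    ((t11, t12, t21, t22) = (0, 0, 0, 0) →
      quotDim (LinearMap.ker delta ⊓ bigraded 2 2) (Submodule.map delta (bigraded 2 1)) = 6) ∧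
    ((t11, t12, t21, t22) ≠ (0, 0, 0, 0) →
      quotDim (LinearMap.ker delta ⊓ bigraded 2 2) (Submodule.map delta (bigraded 2 1)) = 5) := by
  have hexact : (bigraded 2 1).map delta ≤ LinearMap.ker delta ⊓ bigraded 2 2 := by
    rw [map_delta_bigraded_two_one hdelta, Submodule.span_le]
    rintro _ ⟨i, rfl⟩
    exact ⟨delta_exactForm hdelta i, exactForm_mem_bigraded i⟩
  have hquot := Submodule.finrank_quotient_comap_subtype_add_finrank hexact
  have himage : finrank ℂ ((bigraded 2 1).map delta) = 3 := by
    rw [map_delta_bigraded_two_one hdelta, finrank_span_eq_card linearIndependent_exactForm,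
      Fintype.card_fin]
  have hker := Submodule.finrank_ker_inf_add_finrank_map delta (bigraded 2 2)
  rw [map_delta_bigraded_two_two hdelta, finrank_span_range_smul _ x12y123_ne_zero,
    deltaCoeff_eq_zero_iff] at hker
  have hdim : finrank ℂ (bigraded 2 2) = 9 := by
    rw [bigraded_two_two, finrank_span_eq_card linearIndependent_mon22]
    rfl
  unfold quotDim
  constructor <;> intro ht <;> simp only [ht, if_true, if_false] at hker <;> omega

/-- `dim H^{2,2}(t) = dim ((ker δ_t ∩ Λ^{2,2}) / δ_t(Λ^{2,1}))` equals
`6` if `t = 0` and `5` otherwise. -/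
theorem stmt11 (t11 t12 t21 t22 : ℂ) (del delta : Lam →ₗ[ℂ] Lam)
    (hdel : IsDel del) (hdelta : IsDelta t11 t12 t21 t22 delta) :
    ((t11, t12, t21, t22) = (0, 0, 0, 0) →
      quotDim (LinearMap.ker delta ⊓ bigraded 2 2) (Submodule.map delta (bigraded 2 1)) = 6) ∧
    ((t11, t12, t21, t22) ≠ (0, 0, 0, 0) →
      quotDim (LinearMap.ker delta ⊓ bigraded 2 2) (Submodule.map delta (bigraded 2 1)) = 5) :=
  stmt11_general t11 t12 t21 t22 delta hdelta
end
end

section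
/- For every t ∈ ℂ⁴, the dimension of the image of the map d₁^{1,1} induced by ∂ on deformed Dolbeault cohomology in bidegree (1,1), i.e. the dimension of the quotient (∂(ker(δ_t) ∩ Λ^{1,1}) + δ_t(Λ^{2,0})) / δ_t(Λ^{2,0}), equals 2 if (t₁₁,t₁₂,t₂₁,t₂₂) = (0,0,0,0); equals 1 if (t₁₁,t₁₂,t₂₁,t₂₂) ≠ 0 and D(t) = 0; and equals 0 if D(t) ≠ 0. -/
noncomputable section

open ExteriorAlgebra

/-! ### Auxiliary machinery -/

namespace Stmt16Aux

/-- The six generators, uniformly indexed. -/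
def gen (k : Fin 6) : Lam := ExteriorAlgebra.ι ℂ (Pi.single k 1)

lemma xg0 : xg 0 = gen 0 := rfl
lemma xg1 : xg 1 = gen 1 := rfl
lemma xg2 : xg 2 = gen 2 := rfl
lemma yg0 : yg 0 = gen 3 := rfl
lemma yg1 : yg 1 = gen 4 := rfl
lemma yg2 : yg 2 = gen 5 := rfl

lemma gen_sq (k : Fin 6) : gen k * gen k = 0 := ι_sq_zero _

lemma gen_swap (a b : Fin 6) : gen a * gen b = -(gen b * gen a) :=
  eq_neg_of_add_eq_zero_left (ι_add_mul_swap _ _)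

/-- The Leibniz rule for a single generator. -/
lemma leib1 {d : Lam →ₗ[ℂ] Lam} (hd : IsAntiderivation d) (v : Fin 6 → ℂ) (b : Lam) :
    d (ι ℂ v * b) = d (ι ℂ v) * b - ι ℂ v * d b := by
  have h : ι ℂ v ∈ degComp 1 := by
    rw [degComp, pow_one]; exact LinearMap.mem_range_self _ v
  simpa [sub_eq_add_neg] using hd 1 (ι ℂ v) h b

lemma leibx {d : Lam →ₗ[ℂ] Lam} (hd : IsAntiderivation d) (i : Fin 3) (b : Lam) :
    d (xg i * b) = d (xg i) * b - xg i * d b := leib1 hd _ b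

lemma leiby {d : Lam →ₗ[ℂ] Lam} (hd : IsAntiderivation d) (j : Fin 3) (b : Lam) :
    d (yg j * b) = d (yg j) * b - yg j * d b := leib1 hd _ b

/-- Alternating-map family used to build coefficient functionals. -/
def fam (A : (Fin 6 → ℂ) [⋀^Fin 3]→ₗ[ℂ] ℂ) : (i : ℕ) → ((Fin 6 → ℂ) [⋀^Fin i]→ₗ[ℂ] ℂ)
  | 3 => A
  | _ => 0

/-- The coefficient functional extracting the coefficient of the degree-3 monomial
with indices `c 0, c 1, c 2`. -/
def coef (c : Fin 3 → Fin 6) : Lam →ₗ[ℂ] ℂ :=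
  liftAlternating (fam ((Matrix.detRowAlternating).compLinearMap (LinearMap.funLeft ℂ ℂ c)))

lemma coef_triple (c : Fin 3 → Fin 6) (v0 v1 v2 : Fin 6 → ℂ) :
    coef c (ι ℂ v0 * (ι ℂ v1 * ι ℂ v2)) =
      Matrix.det (Matrix.of fun i j => (![v0, v1, v2] i) (c j)) := by
  have h : ι ℂ v0 * (ι ℂ v1 * ι ℂ v2) = ιMulti ℂ 3 ![v0, v1, v2] := by
    rw [ιMulti_apply]; simp [List.ofFn_succ, mul_assoc]
  rw [h, coef, liftAlternating_apply_ιMulti]; rfl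

lemma coef_gen (c : Fin 3 → Fin 6) (a b d : Fin 6) :
    coef c (gen a * (gen b * gen d)) =
      Matrix.det (Matrix.of fun i j =>
        ((Pi.single (![a,b,d] i) (1:ℂ) : Fin 6 → ℂ)) (c j)) := by
  rw [gen, gen, gen, coef_triple]
  congr 1
  ext i j
  fin_cases i <;> simp [Matrix.vecHead, Matrix.vecTail]

/-- The monomials of bidegree (1,1) etc. -/
def m0 : Lam := gen 0 * (gen 1 * gen 3)
def m1 : Lam := gen 0 * (gen 1 * gen 4)
def m2 : Lam := gen 0 * (gen 1 * gen 5)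
def n0 : Lam := gen 0 * (gen 3 * gen 4)
def n1 : Lam := gen 1 * (gen 3 * gen 4)

def Vsp : Submodule ℂ Lam := Submodule.span ℂ {m0, m1}
def Wsp : Submodule ℂ Lam := Submodule.span ℂ {m0, m1, m2}


section Deriv
variable {t11 t12 t21 t22 : ℂ} {d : Lam →ₗ[ℂ] Lam}

lemma delta_x (h : IsDelta t11 t12 t21 t22 d) (i : Fin 3) (hi : i ≠ 2) : d (xg i) = 0 := by
  fin_cases i
  · exact h.2.1
  · exact h.2.2.1
  · exact absurd rfl hi

lemma delta_y (h : IsDelta t11 t12 t21 t22 d) (j : Fin 3) (hj : j ≠ 2) : d (yg j) = 0 := by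
  fin_cases j
  · exact h.2.2.2.2.1
  · exact h.2.2.2.2.2.1
  · exact absurd rfl hj

lemma delta_xy (h : IsDelta t11 t12 t21 t22 d) (i j : Fin 3) (hi : i ≠ 2) (hj : j ≠ 2) :
    d (xg i * yg j) = 0 := by
  rw [leibx h.1, delta_x h i hi, delta_y h j hj]; simp

lemma delta_xy2 (h : IsDelta t11 t12 t21 t22 d) (i : Fin 3) (hi : i ≠ 2) :
    d (xg i * yg 2) = xg i * (yg 0 * yg 1) := by
  rw [leibx h.1, delta_x h i hi, h.2.2.2.2.2.2]; simp [mul_neg]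

lemma delta_x2y0 (h : IsDelta t11 t12 t21 t22 d) :
    d (xg 2 * yg 0) = -(t22 • n0) + t12 • n1 := by
  rw [leibx h.1, h.2.2.2.1, h.2.2.2.2.1]
  simp only [mul_zero, sub_zero, add_mul, sub_mul, smul_mul_assoc, mul_assoc]
  rw [xg0, xg1, yg0, yg1, gen_sq, show gen 4 * gen 3 = -(gen 3 * gen 4) from gen_swap _ _]
  simp only [mul_zero, smul_zero, mul_neg, smul_neg, n0, n1]
  module

lemma delta_x2y1 (h : IsDelta t11 t12 t21 t22 d) :
    d (xg 2 * yg 1) = t21 • n0 - t11 • n1 := by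
  rw [leibx h.1, h.2.2.2.1, h.2.2.2.2.2.1]
  simp only [mul_zero, sub_zero, add_mul, sub_mul, smul_mul_assoc, mul_assoc]
  rw [xg0, xg1, yg0, yg1, gen_sq]
  simp only [mul_zero, smul_zero, n0, n1]
  module

lemma delta_x2y2 (h : IsDelta t11 t12 t21 t22 d) :
    d (xg 2 * yg 2) = t21 • (gen 0 * (gen 3 * gen 5)) - t11 • (gen 1 * (gen 3 * gen 5))
      + t22 • (gen 0 * (gen 4 * gen 5)) - t12 • (gen 1 * (gen 4 * gen 5))
      + gen 2 * (gen 3 * gen 4) := by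
  rw [leibx h.1, h.2.2.2.1, h.2.2.2.2.2.2]
  simp only [mul_neg, sub_neg_eq_add, add_mul, sub_mul, smul_mul_assoc, mul_assoc,
    xg0, xg1, xg2, yg0, yg1, yg2]

lemma delta_x0x1 (h : IsDelta t11 t12 t21 t22 d) : d (xg 0 * xg 1) = 0 := by
  rw [leibx h.1, h.2.1, h.2.2.1]; simp

lemma delta_x0x2 (h : IsDelta t11 t12 t21 t22 d) :
    d (xg 0 * xg 2) = t11 • m0 + t12 • m1 := by
  rw [leibx h.1, h.2.1, h.2.2.2.1]
  simp only [zero_mul, zero_sub, mul_add, mul_sub, mul_smul_comm]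
  rw [xg0, xg1, yg0, yg1, show gen 0 * (gen 0 * gen 3) = 0 by rw [← mul_assoc, gen_sq, zero_mul],
    show gen 0 * (gen 0 * gen 4) = 0 by rw [← mul_assoc, gen_sq, zero_mul]]
  simp only [smul_zero, m0, m1]
  module

lemma delta_x1x2 (h : IsDelta t11 t12 t21 t22 d) :
    d (xg 1 * xg 2) = t21 • m0 + t22 • m1 := by
  rw [leibx h.1, h.2.2.1, h.2.2.2.1]
  simp only [zero_mul, zero_sub, mul_add, mul_sub, mul_smul_comm]
  rw [xg0, xg1, yg0, yg1,
    show gen 1 * (gen 0 * gen 3) = -(gen 0 * (gen 1 * gen 3)) by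
      rw [← mul_assoc, ← mul_assoc, show gen 1 * gen 0 = -(gen 0 * gen 1) from gen_swap _ _,
        neg_mul],
    show gen 1 * (gen 0 * gen 4) = -(gen 0 * (gen 1 * gen 4)) by
      rw [← mul_assoc, ← mul_assoc, show gen 1 * gen 0 = -(gen 0 * gen 1) from gen_swap _ _,
        neg_mul],
    show gen 1 * (gen 1 * gen 3) = 0 by rw [← mul_assoc, gen_sq, zero_mul],
    show gen 1 * (gen 1 * gen 4) = 0 by rw [← mul_assoc, gen_sq, zero_mul]]
  simp only [smul_zero, smul_neg, m0, m1]
  module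

lemma del_xy (h : IsDel d) (i j : Fin 3) (hi : i ≠ 2) : d (xg i * yg j) = 0 := by
  have hx : d (xg i) = 0 := by
    fin_cases i
    · exact h.2.1
    · exact h.2.2.1
    · exact absurd rfl hi
  rw [leibx h.1, hx, h.2.2.2.2 j]; simp

lemma del_x2y (h : IsDel d) (j : Fin 3) :
    d (xg 2 * yg j) = -(gen 0 * (gen 1 * yg j)) := by
  rw [leibx h.1, h.2.2.2.1, h.2.2.2.2 j]
  simp [xg0, xg1, mul_assoc]

end Deriv


/-! coefficient evaluations -/

section Coefs

lemma ce1a : coef ![0,1,5] (gen 0 * (gen 1 * gen 3)) = 0 := by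
  rw [coef_gen]; simp +decide [Matrix.det_fin_three, Pi.single_apply]
lemma ce1b : coef ![0,1,5] (gen 0 * (gen 1 * gen 4)) = 0 := by
  rw [coef_gen]; simp +decide [Matrix.det_fin_three, Pi.single_apply]
lemma ce1c : coef ![0,1,5] (gen 0 * (gen 1 * gen 5)) = 1 := by
  rw [coef_gen]; simp +decide [Matrix.det_fin_three, Pi.single_apply]
lemma ce2a : coef ![2,3,4] (gen 0 * (gen 3 * gen 4)) = 0 := by
  rw [coef_gen]; simp +decide [Matrix.det_fin_three, Pi.single_apply]
lemma ce2b : coef ![2,3,4] (gen 1 * (gen 3 * gen 4)) = 0 := by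
  rw [coef_gen]; simp +decide [Matrix.det_fin_three, Pi.single_apply]
lemma ce2c : coef ![2,3,4] (gen 0 * (gen 3 * gen 5)) = 0 := by
  rw [coef_gen]; simp +decide [Matrix.det_fin_three, Pi.single_apply]
lemma ce2d : coef ![2,3,4] (gen 1 * (gen 3 * gen 5)) = 0 := by
  rw [coef_gen]; simp +decide [Matrix.det_fin_three, Pi.single_apply]
lemma ce2e : coef ![2,3,4] (gen 0 * (gen 4 * gen 5)) = 0 := by
  rw [coef_gen]; simp +decide [Matrix.det_fin_three, Pi.single_apply]
lemma ce2f : coef ![2,3,4] (gen 1 * (gen 4 * gen 5)) = 0 := by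
  rw [coef_gen]; simp +decide [Matrix.det_fin_three, Pi.single_apply]
lemma ce2g : coef ![2,3,4] (gen 2 * (gen 3 * gen 4)) = 1 := by
  rw [coef_gen]; simp +decide [Matrix.det_fin_three, Pi.single_apply]
lemma ce3a : coef ![0,1,3] (gen 0 * (gen 1 * gen 3)) = 1 := by
  rw [coef_gen]; simp +decide [Matrix.det_fin_three, Pi.single_apply]
lemma ce3b : coef ![0,1,3] (gen 0 * (gen 1 * gen 4)) = 0 := by
  rw [coef_gen]; simp +decide [Matrix.det_fin_three, Pi.single_apply]
lemma ce4a : coef ![0,1,4] (gen 0 * (gen 1 * gen 3)) = 0 := by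
  rw [coef_gen]; simp +decide [Matrix.det_fin_three, Pi.single_apply]
lemma ce4b : coef ![0,1,4] (gen 0 * (gen 1 * gen 4)) = 1 := by
  rw [coef_gen]; simp +decide [Matrix.det_fin_three, Pi.single_apply]

end Coefs

/-! monomials and finsets -/

lemma card2_cases : ∀ s : Finset (Fin 3), s.card = 2 → s = {0,1} ∨ s = {0,2} ∨ s = {1,2} := by
  decide

lemma card1_cases : ∀ s : Finset (Fin 3), s.card = 1 → s = {0} ∨ s = {1} ∨ s = {2} := by
  decide

lemma monom_single (i j : Fin 3) : monom {i} {j} = xg i * yg j := by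
  simp [monom, Finset.sort_singleton]

lemma sort01 : ({0,1} : Finset (Fin 3)).sort (· ≤ ·) = [0,1] := by
  have h := Finset.sort_insert (α := Fin 3) (r := (· ≤ ·)) (a := 0) (s := {1})
    (by decide) (by decide)
  simpa using h

lemma sort02 : ({0,2} : Finset (Fin 3)).sort (· ≤ ·) = [0,2] := by
  have h := Finset.sort_insert (α := Fin 3) (r := (· ≤ ·)) (a := 0) (s := {2})
    (by decide) (by decide)
  simpa using h

lemma sort12 : ({1,2} : Finset (Fin 3)).sort (· ≤ ·) = [1,2] := by
  have h := Finset.sort_insert (α := Fin 3) (r := (· ≤ ·)) (a := 1) (s := {2})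
    (by decide) (by decide)
  simpa using h

lemma monom01 : monom {0,1} ∅ = xg 0 * xg 1 := by
  simp [monom, sort01, Finset.sort_empty, mul_assoc]
lemma monom02 : monom {0,2} ∅ = xg 0 * xg 2 := by
  simp [monom, sort02, Finset.sort_empty, mul_assoc]
lemma monom12 : monom {1,2} ∅ = xg 1 * xg 2 := by
  simp [monom, sort12, Finset.sort_empty, mul_assoc]

lemma mem_b11 (i j : Fin 3) : xg i * yg j ∈ bigraded 1 1 :=
  Submodule.subset_span ⟨{i}, {j}, by simp, by simp, (monom_single i j).symm⟩

lemma mem_b20_02 : xg 0 * xg 2 ∈ bigraded 2 0 :=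
  Submodule.subset_span ⟨{0,2}, ∅, by decide, by simp, monom02.symm⟩

lemma mem_b20_12 : xg 1 * xg 2 ∈ bigraded 2 0 :=
  Submodule.subset_span ⟨{1,2}, ∅, by decide, by simp, monom12.symm⟩

lemma mem_Vsp_m0 : m0 ∈ Vsp := Submodule.subset_span (by left; rfl)
lemma mem_Vsp_m1 : m1 ∈ Vsp := Submodule.subset_span (by right; rfl)


/-! coefficient aliases on named monomials -/

lemma c1m0 : coef ![0,1,5] m0 = 0 := ce1a
lemma c1m1 : coef ![0,1,5] m1 = 0 := ce1b
lemma c1m2 : coef ![0,1,5] m2 = 1 := ce1c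
lemma c2n0 : coef ![2,3,4] n0 = 0 := ce2a
lemma c2n1 : coef ![2,3,4] n1 = 0 := ce2b
lemma c3m0 : coef ![0,1,3] m0 = 1 := ce3a
lemma c3m1 : coef ![0,1,3] m1 = 0 := ce3b
lemma c4m0 : coef ![0,1,4] m0 = 0 := ce4a
lemma c4m1 : coef ![0,1,4] m1 = 1 := ce4b

/-! structural lemmas -/

section Struct
variable {t11 t12 t21 t22 : ℂ} {d del delta : Lam →ₗ[ℂ] Lam}

lemma map_delta_b20 (h : IsDelta t11 t12 t21 t22 d) :
    Submodule.map d (bigraded 2 0) =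
      Submodule.span ℂ {t11 • m0 + t12 • m1, t21 • m0 + t22 • m1} := by
  apply le_antisymm
  · rw [bigraded, Submodule.map_span, Submodule.span_le]
    rintro _ ⟨m, ⟨s, u, hs, hu, rfl⟩, rfl⟩
    have hu' : u = ∅ := Finset.card_eq_zero.mp (by exact_mod_cast hu)
    subst hu'
    have hs' : s.card = 2 := by exact_mod_cast hs
    rcases card2_cases s hs' with rfl | rfl | rfl
    · rw [monom01, delta_x0x1 h]; exact Submodule.zero_mem _
    · rw [monom02, delta_x0x2 h]; exact Submodule.subset_span (by left; rfl)
    · rw [monom12, delta_x1x2 h]; exact Submodule.subset_span (by right; rfl)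
  · rw [Submodule.span_le]
    rintro z hz
    simp only [Set.mem_insert_iff, Set.mem_singleton_iff] at hz
    rcases hz with rfl | rfl
    · exact ⟨xg 0 * xg 2, mem_b20_02, delta_x0x2 h⟩
    · exact ⟨xg 1 * xg 2, mem_b20_12, delta_x1x2 h⟩

lemma Wsp_to_Vsp : ∀ w ∈ Wsp, w - (coef ![0,1,5] w) • m2 ∈ Vsp := by
  intro w hw
  refine Submodule.span_induction
    (p := fun w _ => w - (coef ![0,1,5] w) • m2 ∈ Vsp) ?_ ?_ ?_ ?_ hw
  · rintro x hx
    simp only [Set.mem_insert_iff, Set.mem_singleton_iff] at hx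
    rcases hx with rfl | rfl | rfl
    · rw [c1m0]; simpa using mem_Vsp_m0
    · rw [c1m1]; simpa using mem_Vsp_m1
    · rw [c1m2, one_smul, sub_self]; exact Submodule.zero_mem _
  · simp only [map_zero, zero_smul, sub_zero]; exact Submodule.zero_mem _
  · intro x y hx hy px py
    have h : (x + y) - (coef ![0,1,5] (x + y)) • m2
        = (x - coef ![0,1,5] x • m2) + (y - coef ![0,1,5] y • m2) := by
      rw [map_add, add_smul]; module
    rw [h]; exact Submodule.add_mem _ px py
  · intro a x hx px
    have h : (a • x) - (coef ![0,1,5] (a • x)) • m2 = a • (x - coef ![0,1,5] x • m2) := by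
      rw [map_smul, smul_sub, smul_smul, smul_eq_mul]
    rw [h]; exact Submodule.smul_mem _ _ px

lemma N_eq (hdel : IsDel del) (h : IsDelta t11 t12 t21 t22 delta) :
    Submodule.map del (LinearMap.ker delta ⊓ bigraded 1 1) = Vsp := by
  apply le_antisymm
  · rintro _ ⟨a, ⟨hker, ha⟩, rfl⟩
    have hker' : delta a = 0 := LinearMap.mem_ker.mp hker
    -- del a lands in Wsp
    have hW : del a ∈ Wsp := by
      have hle : bigraded 1 1 ≤ Submodule.comap del Wsp := by
        rw [bigraded, Submodule.span_le]
        rintro m ⟨s, u, hs, hu, rfl⟩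
        have hs' : s.card = 1 := by exact_mod_cast hs
        have hu' : u.card = 1 := by exact_mod_cast hu
        simp only [SetLike.mem_coe, Submodule.mem_comap]
        rcases card1_cases s hs' with rfl | rfl | rfl <;>
          rcases card1_cases u hu' with rfl | rfl | rfl <;> rw [monom_single]
        · rw [del_xy hdel 0 0 (by decide)]; exact Submodule.zero_mem _
        · rw [del_xy hdel 0 1 (by decide)]; exact Submodule.zero_mem _
        · rw [del_xy hdel 0 2 (by decide)]; exact Submodule.zero_mem _
        · rw [del_xy hdel 1 0 (by decide)]; exact Submodule.zero_mem _
        · rw [del_xy hdel 1 1 (by decide)]; exact Submodule.zero_mem _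
        · rw [del_xy hdel 1 2 (by decide)]; exact Submodule.zero_mem _
        · rw [del_x2y hdel 0]
          exact Submodule.neg_mem _ (Submodule.subset_span (by left; rfl))
        · rw [del_x2y hdel 1]
          exact Submodule.neg_mem _ (Submodule.subset_span (by right; left; rfl))
        · rw [del_x2y hdel 2]
          exact Submodule.neg_mem _ (Submodule.subset_span (by right; right; rfl))
      exact hle ha
    -- the x₀x₁y₂-coefficient of del a vanishes
    have h0 : coef ![0,1,5] (del a) = 0 := by
      have hle : bigraded 1 1 ≤
          LinearMap.ker ((coef ![0,1,5]) ∘ₗ del + (coef ![2,3,4]) ∘ₗ delta) := by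
        rw [bigraded, Submodule.span_le]
        rintro m ⟨s, u, hs, hu, rfl⟩
        have hs' : s.card = 1 := by exact_mod_cast hs
        have hu' : u.card = 1 := by exact_mod_cast hu
        simp only [SetLike.mem_coe, LinearMap.mem_ker, LinearMap.add_apply,
          LinearMap.comp_apply]
        rcases card1_cases s hs' with rfl | rfl | rfl <;>
          rcases card1_cases u hu' with rfl | rfl | rfl <;> rw [monom_single]
        · rw [del_xy hdel 0 0 (by decide), delta_xy h 0 0 (by decide) (by decide)]; simp
        · rw [del_xy hdel 0 1 (by decide), delta_xy h 0 1 (by decide) (by decide)]; simp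
        · rw [del_xy hdel 0 2 (by decide), delta_xy2 h 0 (by decide)]
          simp [xg0, yg0, yg1, ce2a]
        · rw [del_xy hdel 1 0 (by decide), delta_xy h 1 0 (by decide) (by decide)]; simp
        · rw [del_xy hdel 1 1 (by decide), delta_xy h 1 1 (by decide) (by decide)]; simp
        · rw [del_xy hdel 1 2 (by decide), delta_xy2 h 1 (by decide)]
          simp [xg1, yg0, yg1, ce2b]
        · rw [del_x2y hdel 0, delta_x2y0 h]
          simp [yg0, map_add, map_neg, map_smul, ce1a, c2n0, c2n1]
        · rw [del_x2y hdel 1, delta_x2y1 h]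
          simp [yg1, map_sub, map_neg, map_smul, ce1b, c2n0, c2n1]
        · rw [del_x2y hdel 2, delta_x2y2 h]
          simp [yg2, map_add, map_sub, map_neg, map_smul, ce1c, ce2c, ce2d, ce2e,
            ce2f, ce2g]
      have := hle ha
      simp only [LinearMap.mem_ker, LinearMap.add_apply, LinearMap.comp_apply, hker',
        map_zero, add_zero] at this
      exact this
    have := Wsp_to_Vsp (del a) hW
    rw [h0, zero_smul, sub_zero] at this
    exact this
  · rw [Vsp, Submodule.span_le]
    rintro z hz
    simp only [Set.mem_insert_iff, Set.mem_singleton_iff] at hz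
    rcases hz with rfl | rfl
    · refine ⟨-(t22 • (xg 0 * yg 2) - t12 • (xg 1 * yg 2) + xg 2 * yg 0), ⟨?_, ?_⟩, ?_⟩
      · refine LinearMap.mem_ker.mpr ?_
        rw [map_neg, map_add, map_sub, map_smul, map_smul, delta_xy2 h 0 (by decide),
          delta_xy2 h 1 (by decide), delta_x2y0 h,
          show xg 0 * (yg 0 * yg 1) = n0 from rfl, show xg 1 * (yg 0 * yg 1) = n1 from rfl]
        module
      · refine Submodule.neg_mem _ ?_
        exact Submodule.add_mem _ (Submodule.sub_mem _
          (Submodule.smul_mem _ _ (mem_b11 0 2)) (Submodule.smul_mem _ _ (mem_b11 1 2)))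
          (mem_b11 2 0)
      · rw [map_neg, map_add, map_sub, map_smul, map_smul, del_xy hdel 0 2 (by decide),
          del_xy hdel 1 2 (by decide), del_x2y hdel 0,
          show gen 0 * (gen 1 * yg 0) = m0 from rfl]
        module
    · refine ⟨-(-(t21 • (xg 0 * yg 2)) + t11 • (xg 1 * yg 2) + xg 2 * yg 1), ⟨?_, ?_⟩, ?_⟩
      · refine LinearMap.mem_ker.mpr ?_
        rw [map_neg, map_add, map_add, map_neg, map_smul, map_smul,
          delta_xy2 h 0 (by decide), delta_xy2 h 1 (by decide), delta_x2y1 h,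
          show xg 0 * (yg 0 * yg 1) = n0 from rfl, show xg 1 * (yg 0 * yg 1) = n1 from rfl]
        module
      · refine Submodule.neg_mem _ ?_
        exact Submodule.add_mem _ (Submodule.add_mem _
          (Submodule.neg_mem _ (Submodule.smul_mem _ _ (mem_b11 0 2)))
          (Submodule.smul_mem _ _ (mem_b11 1 2))) (mem_b11 2 1)
      · rw [map_neg, map_add, map_add, map_neg, map_smul, map_smul,
          del_xy hdel 0 2 (by decide), del_xy hdel 1 2 (by decide), del_x2y hdel 1,
          show gen 0 * (gen 1 * yg 1) = m1 from rfl]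
        module

end Struct

/-! rank facts -/

lemma li_m : LinearIndependent ℂ ![m0, m1] := by
  rw [Fintype.linearIndependent_iff]
  intro gc hg
  have h3 := congrArg (coef ![0,1,3]) hg
  have h4 := congrArg (coef ![0,1,4]) hg
  simp only [Fin.sum_univ_two, Matrix.cons_val_zero, Matrix.cons_val_one, Matrix.head_cons,
    map_add, map_smul, map_zero, smul_eq_mul, c3m0, c3m1, c4m0, c4m1,
    mul_one, mul_zero, add_zero, zero_add] at h3 h4
  intro i
  fin_cases i
  · exact h3
  · exact h4

lemma finrank_Vsp : Module.finrank ℂ Vsp = 2 := by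
  have h := finrank_span_eq_card li_m
  rw [show Set.range ![m0, m1] = {m0, m1} by
    ext z; simp [Fin.exists_fin_two, or_comm]] at h
  unfold Vsp; convert h; simp

instance : FiniteDimensional ℂ Vsp := FiniteDimensional.span_of_finite ℂ (Set.toFinite _)

lemma quotDim_eq {K I : Submodule ℂ Lam} [FiniteDimensional ℂ ↥K] (h : I ≤ K) :
    quotDim K I = Module.finrank ℂ K - Module.finrank ℂ I := by
  have h1 := Submodule.finrank_quotient_add_finrank (Submodule.comap K.subtype I)
  have h2 : Module.finrank ℂ (Submodule.comap K.subtype I) = Module.finrank ℂ I :=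
    (Submodule.comapSubtypeEquivOfLe h).finrank_eq
  rw [quotDim]
  omega

lemma span_pair_smul (v : Lam) (c : ℂ) :
    Submodule.span ℂ {v, c • v} = Submodule.span ℂ {v} := by
  rw [Set.pair_comm]
  exact Submodule.span_insert_eq_span
    (Submodule.smul_mem _ _ (Submodule.subset_span rfl))

end Stmt16Aux

open Stmt16Aux

/-- the dimension of the image of `d₁^{1,1}`, i.e. of the quotient
`(∂(ker δ_t ∩ Λ^{1,1}) + δ_t(Λ^{2,0})) / δ_t(Λ^{2,0})`, equals `2` if `t = 0`;
`1` if `t ≠ 0` and `D(t) = 0`; and `0` if `D(t) ≠ 0`. -/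
theorem stmt16 (t11 t12 t21 t22 : ℂ) (del delta : Lam →ₗ[ℂ] Lam)
    (hdel : IsDel del) (hdelta : IsDelta t11 t12 t21 t22 delta) :
    ((t11, t12, t21, t22) = (0, 0, 0, 0) →
      quotDim (Submodule.map del (LinearMap.ker delta ⊓ bigraded 1 1)
          ⊔ Submodule.map delta (bigraded 2 0))
        (Submodule.map delta (bigraded 2 0)) = 2) ∧
    ((t11, t12, t21, t22) ≠ (0, 0, 0, 0) → t11 * t22 - t21 * t12 = 0 →
      quotDim (Submodule.map del (LinearMap.ker delta ⊓ bigraded 1 1)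
          ⊔ Submodule.map delta (bigraded 2 0))
        (Submodule.map delta (bigraded 2 0)) = 1) ∧
    (t11 * t22 - t21 * t12 ≠ 0 →
      quotDim (Submodule.map del (LinearMap.ker delta ⊓ bigraded 1 1)
          ⊔ Submodule.map delta (bigraded 2 0))
        (Submodule.map delta (bigraded 2 0)) = 0) := by
  have hI : Submodule.map delta (bigraded 2 0) =
      Submodule.span ℂ {t11 • m0 + t12 • m1, t21 • m0 + t22 • m1} := map_delta_b20 hdelta
  have hN := N_eq hdel hdelta
  have hIle : Submodule.span ℂ {t11 • m0 + t12 • m1, t21 • m0 + t22 • m1} ≤ Vsp := by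
    rw [Submodule.span_le]
    rintro z hz
    simp only [Set.mem_insert_iff, Set.mem_singleton_iff] at hz
    rcases hz with rfl | rfl
    · exact Submodule.add_mem _ (Submodule.smul_mem _ _ mem_Vsp_m0)
        (Submodule.smul_mem _ _ mem_Vsp_m1)
    · exact Submodule.add_mem _ (Submodule.smul_mem _ _ mem_Vsp_m0)
        (Submodule.smul_mem _ _ mem_Vsp_m1)
  have hK : Submodule.map del (LinearMap.ker delta ⊓ bigraded 1 1)
      ⊔ Submodule.map delta (bigraded 2 0) = Vsp := by
    rw [hN, hI]; exact sup_eq_left.mpr hIle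
  refine ⟨?_, ?_, ?_⟩
  · intro ht
    simp only [Prod.mk.injEq] at ht
    obtain ⟨rfl, rfl, rfl, rfl⟩ := ht
    have hI0 : Submodule.map delta (bigraded 2 0) = ⊥ := by
      rw [hI]; simp
    rw [hK, hI0, quotDim_eq bot_le, finrank_Vsp]
    simp
  · intro hne hD
    have main : ∃ u : Lam, Submodule.map delta (bigraded 2 0) = Submodule.span ℂ {u}
        ∧ u ≠ 0 := by
      rcases ne_or_eq t11 0 with h11 | h11
      · refine ⟨t11 • m0 + t12 • m1, ?_, ?_⟩
        · rw [hI, show t21 • m0 + t22 • m1 = (t21/t11) • (t11 • m0 + t12 • m1) by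
            rw [smul_add, smul_smul, smul_smul, div_mul_cancel₀ _ h11,
              show t21/t11*t12 = t22 by field_simp; linear_combination -hD],
            span_pair_smul]
        · intro h0
          have h3 := congrArg (coef ![0,1,3]) h0
          simp only [map_add, map_smul, map_zero, smul_eq_mul, c3m0, c3m1,
            mul_one, mul_zero, add_zero] at h3
          exact h11 h3
      · subst h11
        rcases ne_or_eq t12 0 with h12 | h12
        · have h21 : t21 = 0 := by
            have h : t21 * t12 = 0 := by linear_combination -hD
            exact (mul_eq_zero.mp h).resolve_right h12
          subst h21
          refine ⟨(0:ℂ) • m0 + t12 • m1, ?_, ?_⟩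
          · rw [hI, show (0:ℂ) • m0 + t22 • m1 = (t22/t12) • ((0:ℂ) • m0 + t12 • m1) by
              rw [smul_add, smul_smul, smul_smul, div_mul_cancel₀ _ h12, mul_zero],
              span_pair_smul]
          · intro h0
            have h4 := congrArg (coef ![0,1,4]) h0
            simp only [map_add, map_smul, map_zero, smul_eq_mul, c4m0, c4m1,
              mul_one, mul_zero, add_zero, zero_add] at h4
            exact h12 h4
        · subst h12
          refine ⟨t21 • m0 + t22 • m1, ?_, ?_⟩
          · rw [hI, show (0:ℂ) • m0 + (0:ℂ) • m1 = (0:Lam) by simp,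
              Submodule.span_insert_zero]
          · intro h0
            apply hne
            have h3 := congrArg (coef ![0,1,3]) h0
            have h4 := congrArg (coef ![0,1,4]) h0
            simp only [map_add, map_smul, map_zero, smul_eq_mul, c3m0, c3m1, c4m0, c4m1,
              mul_one, mul_zero, add_zero, zero_add] at h3 h4
            simp [h3, h4]
    obtain ⟨u, hU, hu0⟩ := main
    have hUle : Submodule.span ℂ {u} ≤ Vsp := hU ▸ (hI ▸ hIle)
    rw [hK, hU, quotDim_eq hUle, finrank_Vsp, finrank_span_singleton hu0]
  · intro hD
    have hVle : Vsp ≤ Submodule.span ℂ {t11 • m0 + t12 • m1, t21 • m0 + t22 • m1} := by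
      rw [Vsp, Submodule.span_le]
      rintro z hz
      simp only [Set.mem_insert_iff, Set.mem_singleton_iff] at hz
      rcases hz with rfl | rfl
      · have key : t22 • (t11 • m0 + t12 • m1) - t12 • (t21 • m0 + t22 • m1)
            = (t11*t22 - t21*t12) • m0 := by module
        have e : m0 = (t11*t22 - t21*t12)⁻¹ •
            (t22 • (t11 • m0 + t12 • m1) - t12 • (t21 • m0 + t22 • m1)) := by
          rw [key, smul_smul, inv_mul_cancel₀ hD, one_smul]
        have mem : (t11*t22 - t21*t12)⁻¹ •
            (t22 • (t11 • m0 + t12 • m1) - t12 • (t21 • m0 + t22 • m1)) ∈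
            Submodule.span ℂ {t11 • m0 + t12 • m1, t21 • m0 + t22 • m1} :=
          Submodule.smul_mem _ _ (Submodule.sub_mem _
            (Submodule.smul_mem _ _ (Submodule.subset_span (by left; rfl)))
            (Submodule.smul_mem _ _ (Submodule.subset_span (by right; rfl))))
        rwa [← e] at mem
      · have key : t11 • (t21 • m0 + t22 • m1) - t21 • (t11 • m0 + t12 • m1)
            = (t11*t22 - t21*t12) • m1 := by module
        have e : m1 = (t11*t22 - t21*t12)⁻¹ •
            (t11 • (t21 • m0 + t22 • m1) - t21 • (t11 • m0 + t12 • m1)) := by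
          rw [key, smul_smul, inv_mul_cancel₀ hD, one_smul]
        have mem : (t11*t22 - t21*t12)⁻¹ •
            (t11 • (t21 • m0 + t22 • m1) - t21 • (t11 • m0 + t12 • m1)) ∈
            Submodule.span ℂ {t11 • m0 + t12 • m1, t21 • m0 + t22 • m1} :=
          Submodule.smul_mem _ _ (Submodule.sub_mem _
            (Submodule.smul_mem _ _ (Submodule.subset_span (by right; rfl)))
            (Submodule.smul_mem _ _ (Submodule.subset_span (by left; rfl))))
        rwa [← e] at mem
    have hIV : Submodule.map delta (bigraded 2 0) = Vsp := by
      rw [hI]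
      exact le_antisymm hIle hVle
    rw [hK, hIV, quotDim_eq le_rfl, Nat.sub_self]
end
end
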